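/- arXiv:1804.02652 — 8 statements merged into one kernel-verified Lean document; each statement's English description precedes it below -/
import Mathlib

section
/- Let E be a Hausdorff locally convex topological vector space over the real numbers. If E has a vector subspace F which, with the induced topology, is an infinite-dimensional Fréchet space, then E has 𝕋^ω as a quotient group; that is, there exists a group homomorphism R from (E, +) onto the topological group 𝕋^ω which is continuous, surjective, and an open map. -/
/-!
Continuous functionals separate the points of `F`, and `F` is infinite-dimensional, so there is
a biorthogonal sequence `e n ∈ F`, `f n ∈ F'` (`f i (e j) = δᵢⱼ`); by Hahn–Banach the `f n`
extend to `E`. Rescaling makes `∑ₙ q (e n)` finite for each of the countably many seminorms `q`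
defining the topology of the Fréchet space `F`, so `∑ₙ tₙ • e n` converges in `F` for every
bounded `t`. With a lift `L : 𝕋 → [-1/2, 1/2)`, the map `y ↦ ∑ₙ L (y n) • e n` is a section of
`R x = (f n x mod 1)ₙ`, and by dominated convergence it is continuous at `0`. A homomorphism
with a section that is continuous at `0` is surjective and open.
-/

open Filter Topology

section Biorthogonal

variable {K V : Type*} [Field K] [AddCommGroup V] [Module K V]

theorem exists_forall_eq_zero_notMem_of_not_finiteDimensional (hV : ¬ FiniteDimensional K V)
    {ι : Type*} (s : Finset ι) (φ : ι → Module.Dual K V) (X : Submodule K V)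
    [FiniteDimensional K X] : ∃ y, (∀ i ∈ s, φ i y = 0) ∧ y ∉ X := by
  by_contra! h
  let Ψ : V →ₗ[K] (s → K) := LinearMap.pi fun i => φ i
  have hker : LinearMap.ker Ψ ≤ X := fun y hy =>
    h y fun i hi => by simpa [Ψ] using congr_fun hy ⟨i, hi⟩
  have : FiniteDimensional K (LinearMap.ker Ψ) := Submodule.finiteDimensional_of_le hker
  exact hV <| Module.finite_def.2 <| Submodule.fg_of_fg_map_of_fg_inf_ker Ψ
    (IsNoetherian.noetherian _) (by simpa [Submodule.fg_iff_finiteDimensional])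

variable [TopologicalSpace K] [IsTopologicalRing K] [TopologicalSpace V] [SeparatingDual K V]

theorem SeparatingDual.exists_eq_one_forall_mem_eq_zero {X : Submodule K V}
    [FiniteDimensional K X] {y : V} (hy : y ∉ X) :
    ∃ f : StrongDual K V, f y = 1 ∧ ∀ x ∈ X, f x = 0 := by
  obtain ⟨g, hgy, hgX⟩ := X.exists_dual_map_eq_bot_of_notMem hy inferInstance
  let W := X ⊔ K ∙ y
  obtain ⟨f, hf⟩ := (SeparatingDual.dualMap_surjective_iff (f := W.subtype)).2
    W.injective_subtype (g ∘ₗ W.subtype)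
  have hfg (w : V) (hw : w ∈ W) : f w = g w := LinearMap.congr_fun hf ⟨w, hw⟩
  have hfy : f y = g y := hfg y (Submodule.mem_sup_right (Submodule.mem_span_singleton_self y))
  refine ⟨(f y)⁻¹ • f, by simp [hfy, hgy], fun x hx => ?_⟩
  have hgx : g x = 0 := by simpa [hgX] using Submodule.mem_map_of_mem (f := g) hx
  simp [hfg x (Submodule.mem_sup_left hx), hgx]

theorem exists_biorthogonal_seq (hV : ¬ FiniteDimensional K V) :
    ∃ (e : ℕ → V) (f : ℕ → StrongDual K V), ∀ i j, f i (e j) = if i = j then 1 else 0 := by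
  obtain ⟨p, hp1, hp⟩ := exists_seq_of_forall_finset_exists
    (fun p : V × StrongDual K V => p.2 p.1 = 1) (fun p p' => p.2 p'.1 = 0 ∧ p'.2 p.1 = 0)
    fun s _ => by
      classical
      obtain ⟨y, hys, hyX⟩ := exists_forall_eq_zero_notMem_of_not_finiteDimensional hV s
        (fun p => (p.2 : Module.Dual K V)) (Submodule.span K (s.image Prod.fst : Set V))
      obtain ⟨f, hfy, hfX⟩ := SeparatingDual.exists_eq_one_forall_mem_eq_zero hyX
      exact ⟨(y, f), hfy, fun p hp => ⟨hys p hp,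
        hfX _ (Submodule.subset_span (Finset.mem_coe.2 (Finset.mem_image_of_mem _ hp)))⟩⟩
  refine ⟨fun n => (p n).1, fun n => (p n).2, fun i j => ?_⟩
  rcases lt_trichotomy i j with h | rfl | h
  · simp [(hp i j h).1, h.ne]
  · simp [hp1]
  · simp [(hp j i h).2, h.ne']

end Biorthogonal

section Seminorms

variable {V : Type*} [AddCommGroup V] [Module ℝ V]

theorem exists_pos_summable_seminorm_smul (q : ℕ → Seminorm ℝ V) (x : ℕ → V) :
    ∃ c : ℕ → ℝ, (∀ n, 0 < c n) ∧ ∀ k, Summable fun n => q k (c n • x n) := by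
  let p n := (Finset.range (n + 1)).sup q
  -- `q k (c n • x n) ≤ 2⁻ⁿ` as soon as `k ≤ n`
  refine ⟨fun n => ((2 : ℝ) ^ n * (1 + p n (x n)))⁻¹, fun n => by positivity, fun k => ?_⟩
  refine Summable.of_norm_bounded_eventually_nat summable_geometric_two
    (eventually_ge_atTop k |>.mono fun n hkn => ?_)
  have hq : q k (x n) ≤ p n (x n) :=
    Seminorm.le_finset_sup_apply (Finset.mem_range.2 (Nat.lt_succ_of_le hkn))
  have hp : 0 ≤ p n (x n) := apply_nonneg _ _
  rw [Real.norm_of_nonneg (apply_nonneg _ _), map_smul_eq_mul, Real.norm_of_nonneg (by positivity),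
    one_div, inv_pow]
  change ((2 : ℝ) ^ n * (1 + p n (x n)))⁻¹ * q k (x n) ≤ _
  rw [mul_inv, mul_assoc]
  exact mul_le_of_le_one_right (by positivity)
    (inv_mul_le_one_of_le₀ (by linarith) (by positivity))

theorem summable_seminorm_smul_of_abs_le_one {q : Seminorm ℝ V} {e : ℕ → V}
    (he : Summable fun n => q (e n)) {t : ℕ → ℝ}
    (ht : ∀ n, |t n| ≤ 1) : Summable fun n => q (t n • e n) := by
  refine he.of_nonneg_of_le (fun n => apply_nonneg _ _) fun n => ?_
  rw [map_smul_eq_mul, Real.norm_eq_abs]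
  exact mul_le_of_le_one_left (apply_nonneg _ _) (ht n)

theorem summable_of_summable_seminorm [UniformSpace V] [IsUniformAddGroup V] [CompleteSpace V]
    {q : ℕ → Seminorm ℝ V}
    (hq : (𝓝 (0 : V)).HasBasis (fun _ => True) fun k => (q k).ball 0 1) {ι : Type*}
    {x : ι → V} (hx : ∀ k, Summable fun n => q k (x n)) : Summable x := by
  refine summable_iff_vanishing.2 fun W hW => ?_
  obtain ⟨k, -, hk⟩ := hq.mem_iff.1 hW
  obtain ⟨s, hs⟩ := (hx k).vanishing (Metric.ball_mem_nhds 0 one_pos)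
  refine ⟨s, fun t ht => hk ?_⟩
  rw [Seminorm.mem_ball_zero]
  calc q k (∑ n ∈ t, x n) ≤ ∑ n ∈ t, q k (x n) :=
        Finset.le_sum_of_subadditive _ (map_zero _).le (map_add_le_add _) t x
    _ ≤ ‖∑ n ∈ t, q k (x n)‖ := Real.le_norm_self _
    _ < 1 := mem_ball_zero_iff.1 (hs t ht)

variable [TopologicalSpace V]

theorem Seminorm.map_tsum_le {ι : Type*} (p : Seminorm ℝ V) (hp : Continuous p) {x : ι → V}
    (h : Summable fun n => p (x n)) : p (∑' n, x n) ≤ ∑' n, p (x n) := by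
  by_cases hx : Summable x
  · refine le_of_tendsto' ((hp.tendsto _).comp hx.hasSum) fun s => ?_
    exact (Finset.le_sum_of_subadditive p (map_zero p).le (map_add_le_add p) s x).trans
      (h.sum_le_tsum s fun n _ => apply_nonneg p _)
  · simpa [tsum_eq_zero_of_not_summable hx] using tsum_nonneg fun n => apply_nonneg p (x n)

theorem apply_tsum_smul_of_biorthogonal {e : ℕ → V} {f : ℕ → StrongDual ℝ V}
    (hfe : ∀ i j, f i (e j) = if i = j then 1 else 0) {t : ℕ → ℝ}
    (ht : Summable fun n => t n • e n) (i : ℕ) : f i (∑' n, t n • e n) = t i := by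
  simp [(f i).map_tsum ht, hfe, eq_comm (a := i)]

theorem exists_biorthogonal_seq_summable_seminorm [SeparatingDual ℝ V]
    (q : ℕ → Seminorm ℝ V) (hV : ¬ FiniteDimensional ℝ V) :
    ∃ (e : ℕ → V) (f : ℕ → StrongDual ℝ V), (∀ i j, f i (e j) = if i = j then 1 else 0) ∧
      ∀ k, Summable fun n => q k (e n) := by
  obtain ⟨e, f, hfe⟩ := exists_biorthogonal_seq (K := ℝ) hV
  obtain ⟨c, hc, hsum⟩ := exists_pos_summable_seminorm_smul q e
  refine ⟨fun n => c n • e n, fun n => (c n)⁻¹ • f n, fun i j => ?_, hsum⟩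
  rcases eq_or_ne i j with rfl | h
  · simp [hfe, (hc i).ne']
  · simp [hfe, h]

variable [IsTopologicalAddGroup V] [ContinuousSMul ℝ V]

theorem exists_seminorm_seq_hasBasis_ball [LocallyConvexSpace ℝ V] [FirstCountableTopology V] :
    ∃ q : ℕ → Seminorm ℝ V, (𝓝 (0 : V)).HasBasis (fun _ => True) fun k => (q k).ball 0 1 := by
  obtain ⟨U, hU, hUprop⟩ := exists_nhds_hasAntitoneBasis_absConvex_open_add_closure_subset ℝ V
  refine ⟨fun k => gaugeSeminorm (hUprop k).2.1.1 (hUprop k).2.1.2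
    (absorbent_nhds_zero (hU.mem k)), ?_⟩
  convert hU.toHasBasis using 2 with k
  exact gaugeSeminorm_ball_one (hUprop k).1

theorem tendsto_tsum_smul_zero {q : ℕ → Seminorm ℝ V} {e : ℕ → V}
    (hq : (𝓝 (0 : V)).HasBasis (fun _ => True) fun k => (q k).ball 0 1)
    (he : ∀ k, Summable fun n => q k (e n)) {α : Type*} {l : Filter α} {t : α → ℕ → ℝ}
    (ht : ∀ a n, |t a n| ≤ 1) (ht0 : ∀ n, Tendsto (t · n) l (𝓝 0)) :
    Tendsto (fun a => ∑' n, t a n • e n) l (𝓝 0) := by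
  refine hq.tendsto_right_iff.2 fun k _ => ?_
  have hbound : Tendsto (fun a => ∑' n, |t a n| * q k (e n)) l (𝓝 0) := by
    have := tendsto_tsum_of_dominated_convergence (he k)
      (fun n => by simpa using ((ht0 n).abs.mul_const (q k (e n))))
      (Eventually.of_forall fun a n => by
        rw [Real.norm_of_nonneg (by positivity)]
        exact mul_le_of_le_one_left (apply_nonneg _ _) (ht a n))
    rwa [tsum_zero] at this
  filter_upwards [hbound.eventually (gt_mem_nhds one_pos)] with a ha
  rw [Seminorm.mem_ball_zero]
  calc q k (∑' n, t a n • e n)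
      ≤ ∑' n, q k (t a n • e n) := (q k).map_tsum_le
        (Seminorm.continuous (hq.mem_of_mem trivial))
        (summable_seminorm_smul_of_abs_le_one (he k) (ht a))
    _ = ∑' n, |t a n| * q k (e n) := by simp only [map_smul_eq_mul, Real.norm_eq_abs]
    _ < 1 := ha

end Seminorms

theorem AddCircle.exists_bounded_section_tendsto_zero {p : ℝ} [Fact (0 < p)] :
    ∃ L : AddCircle p → ℝ, (∀ y, |L y| ≤ p) ∧ (∀ y, (L y : AddCircle p) = y) ∧
      Tendsto L (𝓝 0) (𝓝 0) := by
  have hp : 0 < p := Fact.out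
  refine ⟨fun y => equivIco p (-(p / 2)) y, fun y => ?_, fun y => coe_equivIco, ?_⟩
  · obtain ⟨h1, h2⟩ := (equivIco p (-(p / 2)) y).2
    rw [abs_le]
    constructor <;> linarith
  · have h0 : equivIco p (-(p / 2)) 0 = (0 : ℝ) :=
      equivIco_coe_of_mem (by constructor <;> linarith)
    have hne : (0 : AddCircle p) ≠ ((-(p / 2) : ℝ) : AddCircle p) := by
      intro h
      obtain ⟨n, hn⟩ := (coe_eq_zero_iff p).1 h.symm
      rw [zsmul_eq_mul] at hn
      have : (n : ℝ) * 2 = -1 := by nlinarith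
      have : n * 2 = -1 := by exact_mod_cast this
      omega
    have := (continuous_subtype_val.tendsto _).comp (continuousAt_equivIco p _ hne)
    rwa [Function.comp_def, h0] at this

theorem AddMonoidHom.isOpenMap_of_rightInverse {G H : Type*} [AddGroup G] [TopologicalSpace G]
    [IsTopologicalAddGroup G] [AddGroup H] [TopologicalSpace H] [IsTopologicalAddGroup H]
    (R : G →+ H) {σ : H → G} (hσ : Function.RightInverse σ R) (hσ0 : Tendsto σ (𝓝 0) (𝓝 0)) :
    IsOpenMap R := by
  refine IsTopologicalAddGroup.isOpenMap_iff_nhds_zero.2 ?_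
  calc 𝓝 0 = map (R ∘ σ) (𝓝 0) := by rw [hσ.comp_eq_id, map_id]
    _ ≤ map R (𝓝 0) := by rw [← map_map]; exact map_mono hσ0

/-- **Theorem (Gabriyelyan–Morris).** Let `E` be a Hausdorff locally convex topological
vector space over `ℝ`.  If `E` has a vector subspace `F` which, with the induced topology,
is an infinite-dimensional Fréchet space (i.e. complete, metrizable, and not
finite-dimensional), then `E` has `𝕋^ω` as a quotient group: there is a continuous,
surjective, open group homomorphism from `(E, +)` onto `ℕ → AddCircle (1 : ℝ)`. -/
theorem frechet_subspace_implies_torus_quotient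
    (E : Type*) [AddCommGroup E] [Module ℝ E] [UniformSpace E] [IsUniformAddGroup E]
    [ContinuousSMul ℝ E] [LocallyConvexSpace ℝ E] [T2Space E]
    (F : Submodule ℝ E)
    (hF_complete : IsComplete (F : Set E))
    (hF_metrizable : TopologicalSpace.MetrizableSpace F)
    (hF_infdim : ¬ FiniteDimensional ℝ F) :
    ∃ R : E →+ (ℕ → AddCircle (1 : ℝ)),
      Continuous R ∧ Function.Surjective R ∧ IsOpenMap R := by
  have := hF_metrizable
  have : CompleteSpace F := hF_complete.completeSpace_coe
  have : IsUniformAddGroup F := F.toAddSubgroup.isUniformAddGroup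
  obtain ⟨q, hq⟩ := exists_seminorm_seq_hasBasis_ball (V := F)
  obtain ⟨e, φ, hφe, he⟩ := exists_biorthogonal_seq_summable_seminorm q hF_infdim
  choose f hf using fun n => StrongDual.exists_extension F (φ n)
  obtain ⟨L, hL1, hLR, hL0⟩ := AddCircle.exists_bounded_section_tendsto_zero (p := (1 : ℝ))
  let R : E →+ (ℕ → AddCircle (1 : ℝ)) :=
    AddMonoidHom.pi fun n => (QuotientAddGroup.mk' _).comp (f n).toLinearMap.toAddMonoidHom
  let σ : (ℕ → AddCircle (1 : ℝ)) → E := fun y => ((∑' n, L (y n) • e n : F) : E)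
  have hRσ : Function.RightInverse σ R := fun y => funext fun i => by
    have hsum := summable_of_summable_seminorm hq fun k =>
      summable_seminorm_smul_of_abs_le_one (he k) fun n => hL1 (y n)
    simp [R, σ, hf, apply_tsum_smul_of_biorthogonal hφe hsum i, hLR]
  have hσ : Tendsto σ (𝓝 0) (𝓝 0) :=
    (continuous_subtype_val.tendsto' 0 0 rfl).comp <| tendsto_tsum_smul_zero hq he
      (fun y n => hL1 (y n)) fun n => hL0.comp ((continuous_apply n).tendsto' 0 0 rfl)
  exact ⟨R, continuous_pi fun n => (AddCircle.continuous_mk' 1).comp (f n).continuous,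
    hRσ.surjective, R.isOpenMap_of_rightInverse hRσ hσ⟩
end

section
/- Every infinite-dimensional Fréchet space over ℝ has 𝕋^ω as a quotient group; that is, for every infinite-dimensional complete metrizable locally convex real topological vector space E there exists a group homomorphism from (E, +) onto 𝕋^ω which is continuous, surjective, and an open map. -/
open Set Filter Topology Pointwise

/-- Absolutely convex combination lemma. -/
theorem absconvex_sum_mem' {E : Type*} [AddCommGroup E] [Module ℝ E]
    {W : Set E} (hconv : Convex ℝ W) (hbal : Balanced ℝ W) (h0 : (0:E) ∈ W)
    {ι : Type*} (s : Finset ι) (t : ι → ℝ) (w : ι → E) (hw : ∀ i ∈ s, w i ∈ W) :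
    (∑ i ∈ s, t i • w i) ∈ (∑ i ∈ s, |t i|) • W := by
  classical
  induction s using Finset.cons_induction with
  | empty => simpa [Set.zero_smul_set (⟨0, h0⟩ : W.Nonempty)] using rfl
  | cons a s ha ih =>
    rw [Finset.sum_cons, Finset.sum_cons,
      hconv.add_smul (abs_nonneg _) (Finset.sum_nonneg fun i _ => abs_nonneg _)]
    refine Set.add_mem_add ?_ (ih fun i hi => hw i (Finset.mem_cons_of_mem hi))
    rcases le_or_gt 0 (t a) with h | h
    · rw [abs_of_nonneg h]
      exact Set.smul_mem_smul_set (hw a (Finset.mem_cons_self _ _))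
    · rw [abs_of_neg h]
      have hw' : -w a ∈ W := by
        have := hbal (-1) (by norm_num)
        exact this ⟨w a, hw a (Finset.mem_cons_self _ _), by simp⟩
      have : t a • w a = (-t a) • (-w a) := by simp
      rw [this]
      exact Set.smul_mem_smul_set hw'

theorem absconvex_sum_mem {E : Type*} [AddCommGroup E] [Module ℝ E]
    {W : Set E} (hconv : Convex ℝ W) (hbal : Balanced ℝ W) (h0 : (0:E) ∈ W)
    {ι : Type*} (s : Finset ι) (t : ι → ℝ) (w : ι → E) (hw : ∀ i ∈ s, w i ∈ W)
    (ht : ∑ i ∈ s, |t i| ≤ 1) :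
    (∑ i ∈ s, t i • w i) ∈ W := by
  have := absconvex_sum_mem' hconv hbal h0 s t w hw
  have h2 : ((∑ i ∈ s, |t i|) • W : Set E) ⊆ W := by
    have := hbal (∑ i ∈ s, |t i|) (by
      rw [Real.norm_eq_abs, abs_of_nonneg (Finset.sum_nonneg fun i _ => abs_nonneg _)]
      exact ht)
    exact this
  exact h2 this

/-- geometric tail bound -/
theorem geom_tail_bound {m : ℕ} (t : Finset ℕ) (hd : ∀ k ∈ t, m ≤ k) :
    ∑ k ∈ t, ((2:ℝ)⁻¹)^k ≤ 2 * 2⁻¹^m := by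
  classical
  have hsub : t ⊆ Finset.Ico m (t.sup id + 1) := by
    intro k hk
    simp only [Finset.mem_Ico]
    exact ⟨hd k hk, Nat.lt_succ_of_le (Finset.le_sup (f := id) hk)⟩
  calc ∑ k ∈ t, ((2:ℝ)⁻¹)^k ≤ ∑ k ∈ Finset.Ico m (t.sup id + 1), ((2:ℝ)⁻¹)^k :=
        Finset.sum_le_sum_of_subset_of_nonneg hsub (fun i _ _ => by positivity)
    _ = ∑ k ∈ Finset.range (t.sup id + 1 - m), ((2:ℝ)⁻¹)^(m + k) := by
        rw [Finset.sum_Ico_eq_sum_range]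
    _ = 2⁻¹^m * ∑ k ∈ Finset.range (t.sup id + 1 - m), ((2:ℝ)⁻¹)^k := by
        rw [Finset.mul_sum]; congr 1; ext k; rw [pow_add]
    _ ≤ 2⁻¹^m * 2 := by
        refine mul_le_mul_of_nonneg_left ?_ (by positivity)
        have := sum_geometric_two_le (t.sup id + 1 - m)
        simpa [one_div] using this
    _ = 2 * 2⁻¹^m := mul_comm _ _

theorem exists_absconvex_nhd (E : Type*) [AddCommGroup E] [Module ℝ E] [UniformSpace E]
    [IsUniformAddGroup E] [ContinuousSMul ℝ E] [LocallyConvexSpace ℝ E]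
    {U : Set E} (hU : U ∈ 𝓝 (0:E)) :
    ∃ V, V ∈ 𝓝 (0:E) ∧ Convex ℝ V ∧ Balanced ℝ V ∧ V ⊆ U := by
  obtain ⟨V, ⟨hV, hVb, hVc⟩, hVU⟩ := (nhds_hasBasis_absConvex ℝ E).mem_iff.mp hU
  exact ⟨V, hV, hVc, hVb, hVU⟩

theorem exists_absconvex_basis (E : Type*) [AddCommGroup E] [Module ℝ E] [UniformSpace E]
    [IsUniformAddGroup E] [ContinuousSMul ℝ E] [LocallyConvexSpace ℝ E]
    [TopologicalSpace.MetrizableSpace E] :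
    ∃ W : ℕ → Set E, (∀ n, W n ∈ 𝓝 0 ∧ Convex ℝ (W n) ∧ Balanced ℝ (W n)) ∧
      (∀ m n, m ≤ n → W n ⊆ W m) ∧ (∀ U ∈ 𝓝 (0:E), ∃ m, W m ⊆ U) := by
  obtain ⟨B, hB⟩ := (𝓝 (0:E)).exists_antitone_basis
  have h1 : ∀ n, ∃ V, V ∈ 𝓝 (0:E) ∧ Convex ℝ V ∧ Balanced ℝ V ∧ V ⊆ B n := fun n =>
    exists_absconvex_nhd E (hB.mem n)
  choose V hVn hVc hVb hVB using h1
  refine ⟨fun n => ⋂ k ∈ Finset.range (n+1), V k, fun n => ⟨?_, ?_, ?_⟩, ?_, ?_⟩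
  · exact (Finset.range (n+1)).iInter_mem_sets.mpr fun k _ => hVn k
  · exact convex_iInter fun k => convex_iInter fun _ => hVc k
  · exact balanced_iInter₂ fun k _ => hVb k
  · intro m n hmn x hx
    refine Set.mem_iInter₂.mpr fun k hk => Set.mem_iInter₂.mp hx k ?_
    simp only [Finset.mem_range] at *; omega
  · intro U hU
    obtain ⟨m, hm⟩ := hB.mem_iff.mp hU
    exact ⟨m, fun x hx =>
      hm ((hVB m) (Set.mem_iInter₂.mp hx m (Finset.self_mem_range_succ m)))⟩

theorem biorthogonal_step (E : Type*) [AddCommGroup E] [Module ℝ E] [UniformSpace E]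
    [IsUniformAddGroup E] [ContinuousSMul ℝ E] [LocallyConvexSpace ℝ E]
    [TopologicalSpace.MetrizableSpace E]
    (h_infdim : ¬ FiniteDimensional ℝ E) {n : ℕ} (x : Fin n → E) (f : Fin n → E →L[ℝ] ℝ)
    (hbi : ∀ i j, f i (x j) = if (i:ℕ) = (j:ℕ) then 1 else 0) :
    ∃ (y : E) (g : E →L[ℝ] ℝ), (∀ i, f i y = 0) ∧ (∀ i, g (x i) = 0) ∧ g y = 1 := by
  classical
  -- find y ≠ 0 killed by all f i
  obtain ⟨y, hy0, hyk⟩ : ∃ y : E, y ≠ 0 ∧ ∀ i, f i y = 0 := by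
    by_contra h
    push_neg at h
    have hinj : Function.Injective (LinearMap.pi (fun i : Fin n => (f i : E →ₗ[ℝ] ℝ))) := by
      rw [← LinearMap.ker_eq_bot]
      refine (Submodule.eq_bot_iff _).mpr fun v hv => ?_
      by_contra hv0
      obtain ⟨i, hi⟩ := h v hv0
      exact hi (congrFun (LinearMap.mem_ker.mp hv) i)
    exact h_infdim (FiniteDimensional.of_injective _ hinj)
  have hspan : y ∉ Submodule.span ℝ (Set.range x) := by
    intro hmem
    rw [Submodule.mem_span_range_iff_exists_fun] at hmem
    obtain ⟨c, hc⟩ := hmem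
    have hcz : ∀ j, c j = 0 := by
      intro j
      have h1 := congrArg (f j) hc
      rw [map_sum] at h1
      simp only [map_smul, hbi, smul_eq_mul, mul_ite, mul_one, mul_zero, Fin.val_inj,
        Finset.sum_ite_eq, Finset.mem_univ, if_true, hyk j] at h1
      exact h1
    apply hy0
    rw [← hc]
    simp [hcz]
  -- Hahn-Banach separation
  haveI : FiniteDimensional ℝ (Submodule.span ℝ (Set.range x)) :=
    FiniteDimensional.span_of_finite ℝ (Set.finite_range x)
  have hclosed : IsClosed ((Submodule.span ℝ (Set.range x) : Submodule ℝ E) : Set E) :=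
    Submodule.closed_of_finiteDimensional _
  obtain ⟨g₀, u, hgu, huy⟩ := geometric_hahn_banach_closed_point
    (Submodule.span ℝ (Set.range x)).convex hclosed hspan
  have hu0 : 0 < u := by simpa using hgu 0 (Submodule.zero_mem _)
  have hg0 : ∀ v ∈ Submodule.span ℝ (Set.range x), g₀ v = 0 := by
    intro v hv
    by_contra hne
    have hall : ∀ t : ℝ, t * g₀ v < u := fun t => by
      simpa using hgu (t • v) (Submodule.smul_mem _ t hv)
    have := hall ((u + 1) / g₀ v)
    rw [div_mul_cancel₀ _ hne] at this
    linarith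
  have hgy : g₀ y ≠ 0 := (hu0.trans huy).ne'
  exact ⟨y, (g₀ y)⁻¹ • g₀, hyk,
    fun i => by simp [hg0 (x i) (Submodule.subset_span (Set.mem_range_self i))],
    by simp [inv_mul_cancel₀ hgy]⟩

noncomputable def extendSeq {β : Type*} (P : (n : ℕ) → (Fin n → β) → Prop) (h0 : P 0 (fun i => i.elim0))
    (step : ∀ n (p : Fin n → β), P n p → ∃ q, P (n+1) (Fin.snoc p q)) :
    (n : ℕ) → {p : Fin n → β // P n p}
  | 0 => ⟨fun i => i.elim0, h0⟩
  | (n+1) => ⟨Fin.snoc (extendSeq P h0 step n).1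
      (step n (extendSeq P h0 step n).1 (extendSeq P h0 step n).2).choose,
      (step n (extendSeq P h0 step n).1 (extendSeq P h0 step n).2).choose_spec⟩

theorem extendSeq_succ {β : Type*} (P : (n : ℕ) → (Fin n → β) → Prop) (h0 : P 0 (fun i => i.elim0))
    (step : ∀ n (p : Fin n → β), P n p → ∃ q, P (n+1) (Fin.snoc p q)) (n : ℕ) :
    (extendSeq P h0 step (n+1)).1 = Fin.snoc (extendSeq P h0 step n).1
      (step n (extendSeq P h0 step n).1 (extendSeq P h0 step n).2).choose := rfl

theorem exists_biorthogonal (E : Type*) [AddCommGroup E] [Module ℝ E] [UniformSpace E]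
    [IsUniformAddGroup E] [ContinuousSMul ℝ E] [LocallyConvexSpace ℝ E]
    [TopologicalSpace.MetrizableSpace E]
    (h_infdim : ¬ FiniteDimensional ℝ E) :
    ∃ (x : ℕ → E) (f : ℕ → E →L[ℝ] ℝ), ∀ i j, f i (x j) = if i = j then 1 else 0 := by
  classical
  let good : (n : ℕ) → (Fin n → E × (E →L[ℝ] ℝ)) → Prop := fun n p =>
    ∀ i j, (p i).2 (p j).1 = if (i:ℕ) = (j:ℕ) then 1 else 0
  have step : ∀ n (p : Fin n → E × (E →L[ℝ] ℝ)), good n p →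
      ∃ q, good (n+1) (Fin.snoc p q) := by
    intro n p hp
    obtain ⟨y, g, h1, h2, h3⟩ := biorthogonal_step E h_infdim
      (fun i => (p i).1) (fun i => (p i).2) hp
    refine ⟨(y, g), ?_⟩
    intro i j
    induction i using Fin.lastCases with
    | last =>
      induction j using Fin.lastCases with
      | last => simp [Fin.snoc_last, h3]
      | cast j =>
        simp only [Fin.snoc_last, Fin.snoc_castSucc]
        rw [h2 j, if_neg]
        simp only [Fin.val_last, Fin.coe_castSucc]
        omega
    | cast i =>
      induction j using Fin.lastCases with
      | last =>
        simp only [Fin.snoc_last, Fin.snoc_castSucc]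
        rw [h1 i, if_neg]
        simp only [Fin.val_last, Fin.coe_castSucc]
        omega
      | cast j =>
        simp only [Fin.snoc_castSucc]
        exact hp i j
  let F : (n : ℕ) → {p : Fin n → E × (E →L[ℝ] ℝ) // good n p} :=
    extendSeq good (fun i => i.elim0) step
  let q : ℕ → E × (E →L[ℝ] ℝ) := fun k => (F (k+1)).1 (Fin.last k)
  have hFq : ∀ n (i : Fin n), (F n).1 i = q i.1 := by
    intro n
    induction n with
    | zero => exact fun i => i.elim0
    | succ n ih =>
      intro i
      induction i using Fin.lastCases with
      | last =>
        rfl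
      | cast i =>
        have h1 : (F (n+1)).1 i.castSucc = (F n).1 i := by
          rw [extendSeq_succ, Fin.snoc_castSucc]
        rw [h1, ih i]
        rfl
  refine ⟨fun k => (q k).1, fun k => (q k).2, fun i j => ?_⟩
  set N := max i j + 1
  have hi : i < N := by omega
  have hj : j < N := by omega
  have := (F N).2 ⟨i, hi⟩ ⟨j, hj⟩
  rw [hFq N ⟨i, hi⟩, hFq N ⟨j, hj⟩] at this
  exact this

section

variable {E : Type*} [AddCommGroup E] [Module ℝ E] [UniformSpace E]
    [IsUniformAddGroup E] [ContinuousSMul ℝ E] [CompleteSpace E]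

theorem partial_sum_mem {W : Set E} (hWc : Convex ℝ W) (hWb : Balanced ℝ W) (h0 : (0:E) ∈ W)
    {m : ℕ} {x : ℕ → E} {w : ℕ → E} (hw : ∀ k, m ≤ k → w k ∈ W)
    (hxw : ∀ k, x k = ((2:ℝ)⁻¹)^(k+2) • w k)
    {c : ℕ → ℝ} (hc : ∀ n, |c n| ≤ 1) (t : Finset ℕ) (ht : ∀ k ∈ t, m ≤ k) :
    ∑ k ∈ t, c k • x k ∈ ((2:ℝ)⁻¹)^(m+1) • W := by
  have key : ∑ k ∈ t, c k • x k =
      ((2:ℝ)⁻¹)^(m+1) • ∑ k ∈ t, (c k * ((2:ℝ)^(m+1) * 2⁻¹^(k+2))) • w k := by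
    rw [Finset.smul_sum]
    refine Finset.sum_congr rfl fun k hk => ?_
    rw [hxw k, smul_smul, smul_smul]
    congr 1
    have h2 : ((2:ℝ)⁻¹)^(m+1) * (c k * (2^(m+1) * 2⁻¹^(k+2))) =
        c k * ((2⁻¹^(m+1) * 2^(m+1)) * 2⁻¹^(k+2)) := by ring
    rw [h2, ← mul_pow, inv_mul_cancel₀ (two_ne_zero), one_pow, one_mul]
  rw [key]
  refine Set.smul_mem_smul_set ?_
  refine absconvex_sum_mem hWc hWb h0 t _ w (fun k hk => hw k (ht k hk)) ?_
  calc ∑ k ∈ t, |c k * (2^(m+1) * 2⁻¹^(k+2))|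
      ≤ ∑ k ∈ t, 2^(m+1) * 2⁻¹^(k+2) := by
        refine Finset.sum_le_sum fun k hk => ?_
        rw [abs_mul]
        have h1 : |(2:ℝ)^(m+1) * 2⁻¹^(k+2)| = 2^(m+1) * 2⁻¹^(k+2) := abs_of_pos (by positivity)
        rw [h1]
        exact mul_le_of_le_one_left (by positivity) (hc k)
    _ = 2^(m+1) * 4⁻¹ * ∑ k ∈ t, ((2:ℝ)⁻¹)^k := by
        rw [Finset.mul_sum]
        refine Finset.sum_congr rfl fun k hk => ?_
        rw [pow_add]
        norm_num
        ring
    _ ≤ 2^(m+1) * 4⁻¹ * (2 * 2⁻¹^m) := by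
        refine mul_le_mul_of_nonneg_left (geom_tail_bound t ht) (by positivity)
    _ = (2^(m+1) * 2⁻¹^(m+1)) := by ring
    _ = 1 := by rw [← mul_pow]; norm_num

theorem summable_coef {W : ℕ → Set E}
    (hWn : ∀ n, W n ∈ 𝓝 0) (hWc : ∀ n, Convex ℝ (W n)) (hWb : ∀ n, Balanced ℝ (W n))
    (hWanti : ∀ m n, m ≤ n → W n ⊆ W m)
    (hWbasis : ∀ U ∈ 𝓝 (0:E), ∃ m, W m ⊆ U)
    {x : ℕ → E} {w : ℕ → E} (hwW : ∀ k, w k ∈ W k)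
    (hxw : ∀ k, x k = ((2:ℝ)⁻¹)^(k+2) • w k)
    {c : ℕ → ℝ} (hc : ∀ n, |c n| ≤ 1) :
    Summable (fun n => c n • x n) := by
  rw [summable_iff_vanishing]
  intro e he
  obtain ⟨m, hm⟩ := hWbasis e he
  refine ⟨Finset.range m, fun t htd => ?_⟩
  have hge : ∀ k ∈ t, m ≤ k := by
    intro k hk
    by_contra hlt
    exact (Finset.disjoint_left.mp htd hk) (Finset.mem_range.mpr (by omega))
  have := partial_sum_mem (hWc m) (hWb m) (mem_of_mem_nhds (hWn m))
    (fun k hk => hWanti m k hk (hwW k)) hxw hc t hge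
  apply hm
  have hsub : (((2:ℝ)⁻¹)^(m+1) • W m : Set E) ⊆ W m := by
    refine hWb m (((2:ℝ)⁻¹)^(m+1)) ?_
    rw [Real.norm_eq_abs, abs_of_pos (by positivity)]
    refine pow_le_one₀ (by norm_num) (by norm_num)
  exact hsub this

theorem apply_tsum_coef {f : ℕ → E →L[ℝ] ℝ} {x : ℕ → E}
    (hbi : ∀ i j, f i (x j) = if i = j then 1 else 0) {c : ℕ → ℝ}
    (hs : Summable fun n => c n • x n) (n : ℕ) :
    f n (∑' k, c k • x k) = c n := by
  have h1 : HasSum (fun k => f n (c k • x k)) (f n (∑' k, c k • x k)) :=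
    (f n).hasSum hs.hasSum
  have h2 : (fun k => f n (c k • x k)) = fun k => if k = n then c n else 0 := by
    funext k
    rw [map_smul]
    rcases eq_or_ne k n with h | h
    · simp [h, hbi n n]
    · have := hbi n k
      rw [if_neg (Ne.symm h)] at this
      simp [h, this]
  rw [h2] at h1
  exact h1.unique (hasSum_ite_eq n (c n))

theorem closure_half_subset {W : Set E} (hWn : W ∈ 𝓝 0) (hWc : Convex ℝ W)
    (hWb : Balanced ℝ W) : closure (((2:ℝ)⁻¹) • W) ⊆ W := by
  intro z hz
  have hN : ((2⁻¹:ℝ) • W) ∈ 𝓝 (0:E) := (set_smul_mem_nhds_zero_iff (by norm_num)).mpr hWn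
  have ht : {y : E | z - y ∈ (2⁻¹:ℝ) • W} ∈ 𝓝 z := by
    have hcont : Continuous fun y : E => z - y := continuous_const.sub continuous_id
    have h0 : z - z = 0 := sub_self z
    have := hcont.continuousAt (x := z)
    rw [ContinuousAt, h0] at this
    exact this hN
  obtain ⟨y, hy1, hy2⟩ := mem_closure_iff_nhds.mp hz _ ht
  obtain ⟨w1, hw1, hw1e⟩ := Set.mem_smul_set.mp hy2
  obtain ⟨w2, hw2, hw2e⟩ := Set.mem_smul_set.mp hy1
  have : z = (2⁻¹:ℝ) • w1 + (2⁻¹:ℝ) • w2 := by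
    rw [hw1e, hw2e]
    abel
  rw [this]
  exact hWc hw1 hw2 (by norm_num) (by norm_num) (by norm_num)

end

/-- Every infinite-dimensional Fréchet space over `ℝ` (a complete metrizable locally
convex real topological vector space that is not finite-dimensional) has `𝕋^ω` as a
quotient group: there is a continuous, surjective, open group homomorphism from
`(E, +)` onto `ℕ → AddCircle (1 : ℝ)`. -/
theorem frechet_space_has_torus_quotient
    (E : Type*) [AddCommGroup E] [Module ℝ E] [UniformSpace E] [IsUniformAddGroup E]
    [ContinuousSMul ℝ E] [LocallyConvexSpace ℝ E]
    [CompleteSpace E] [TopologicalSpace.MetrizableSpace E]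
    (h_infdim : ¬ FiniteDimensional ℝ E) :
    ∃ R : E →+ (ℕ → AddCircle (1 : ℝ)),
      Continuous R ∧ Function.Surjective R ∧ IsOpenMap R := by
  classical
  haveI : Fact ((0:ℝ) < 1) := ⟨one_pos⟩
  obtain ⟨W, hWp, hWanti, hWbasis⟩ := exists_absconvex_basis E
  have hWn : ∀ n, W n ∈ 𝓝 0 := fun n => (hWp n).1
  have hWc : ∀ n, Convex ℝ (W n) := fun n => (hWp n).2.1
  have hWb : ∀ n, Balanced ℝ (W n) := fun n => (hWp n).2.2
  obtain ⟨y, g, hbi₀⟩ := exists_biorthogonal E h_infdim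
  -- rescale the biorthogonal system
  have hscale : ∀ n : ℕ, ∃ t : ℝ, t ≠ 0 ∧ t • y n ∈ ((2:ℝ)⁻¹)^(n+2) • W n := by
    intro n
    have hN : (((2:ℝ)⁻¹)^(n+2) • W n : Set E) ∈ 𝓝 (0:E) :=
      (set_smul_mem_nhds_zero_iff (by positivity)).mpr (hWn n)
    have hcont : Continuous fun t : ℝ => t • y n := continuous_id.smul continuous_const
    have hat := hcont.continuousAt (x := (0:ℝ))
    rw [ContinuousAt, zero_smul] at hat
    have := hat hN
    obtain ⟨δ, hδ, hball⟩ := Metric.mem_nhds_iff.mp this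
    refine ⟨δ/2, by positivity, hball ?_⟩
    rw [Metric.mem_ball, Real.dist_eq, sub_zero, abs_of_pos (by positivity)]
    linarith
  choose t ht0 htW using hscale
  set x : ℕ → E := fun n => t n • y n with hxdef
  set f : ℕ → E →L[ℝ] ℝ := fun n => (t n)⁻¹ • g n with hfdef
  have hbi : ∀ i j, f i (x j) = if i = j then 1 else 0 := by
    intro i j
    simp only [hfdef, hxdef, ContinuousLinearMap.smul_apply, map_smul, smul_eq_mul]
    rw [hbi₀ i j]
    rcases eq_or_ne i j with h | h
    · subst h; simp [mul_inv_cancel₀ (ht0 i)]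
    · simp [h]
  have hxmem : ∀ n, x n ∈ ((2:ℝ)⁻¹)^(n+2) • W n := fun n => htW n
  choose w hwW hxw' using fun n => Set.mem_smul_set.mp (hxmem n)
  have hxw : ∀ k, x k = ((2:ℝ)⁻¹)^(k+2) • w k := fun k => (hxw' k).symm
  -- the homomorphism
  let R : E →+ (ℕ → AddCircle (1:ℝ)) :=
    { toFun := fun v n => ((f n v : ℝ) : AddCircle (1:ℝ))
      map_zero' := by funext n; simp
      map_add' := fun a b => by
        funext n
        simp [map_add, QuotientAddGroup.mk_add] }
  have hRapp : ∀ v n, R v n = ((f n v : ℝ) : AddCircle (1:ℝ)) := fun _ _ => rfl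
  have hcont : Continuous R := by
    have hRfun : ⇑R = fun v => fun n => ((f n v : ℝ) : AddCircle (1:ℝ)) := rfl
    rw [hRfun]
    exact continuous_pi fun n => (AddCircle.continuous_mk' (1:ℝ)).comp (f n).continuous
  clear_value R
  -- surjectivity
  have hrep : ∀ z : AddCircle (1:ℝ), ∃ c : ℝ, |c| ≤ 1 ∧ ((c : ℝ) : AddCircle (1:ℝ)) = z := by
    intro z
    refine ⟨(AddCircle.equivIco 1 0 z : ℝ), ?_, ?_⟩
    · have h1 := (AddCircle.equivIco 1 0 z).2
      rw [Set.mem_Ico] at h1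
      rw [abs_le]
      constructor <;> [linarith [h1.1]; linarith [h1.2]]
    · exact (AddCircle.equivIco 1 0).symm_apply_apply z
  have hsurj : Function.Surjective R := by
    intro a
    choose c hc1 hc2 using fun n => hrep (a n)
    have hsum := summable_coef hWn hWc hWb hWanti hWbasis hwW hxw hc1
    refine ⟨∑' k, c k • x k, ?_⟩
    funext n
    rw [hRapp, apply_tsum_coef hbi hsum n, hc2]
  -- key : images of neighborhoods of 0 are neighborhoods of 0
  have key : ∀ U ∈ 𝓝 (0:E), R '' U ∈ 𝓝 (0 : ℕ → AddCircle (1:ℝ)) := by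
    intro U hU
    obtain ⟨m₀, hm₀⟩ := hWbasis U hU
    set m := m₀ + 1 with hm
    have hWmU : W m ⊆ U := (hWanti m₀ m (Nat.le_succ m₀)).trans hm₀
    -- absorb earlier vectors
    have habs : ∀ n : ℕ, ∃ γ : ℝ, 1 ≤ γ ∧ x n ∈ γ • W m := by
      intro n
      obtain ⟨r, hr⟩ := absorbs_iff_norm.mp (absorbent_nhds_zero (𝕜 := ℝ) (hWn m) (x n))
      refine ⟨max r 1, le_max_right _ _, ?_⟩
      have h2 := hr (max r 1) (by
        rw [Real.norm_eq_abs, abs_of_pos (by positivity)]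
        exact le_max_left _ _)
      exact Set.singleton_subset_iff.mp h2
    choose γ hγ1 hγW using habs
    choose w' hw'W hw'x using fun n => Set.mem_smul_set.mp (hγW n)
    set S : ℝ := ∑ n ∈ Finset.range m, γ n with hS
    have hSpos : 0 < S + 1 := by
      have : 0 ≤ S := Finset.sum_nonneg fun n _ => le_trans zero_le_one (hγ1 n)
      linarith
    set ε : ℝ := min 1 ((4*(S+1))⁻¹) with hε
    have hεpos : 0 < ε := lt_min one_pos (by positivity)
    have hε1 : ε ≤ 1 := min_le_left _ _
    have hS0 : 0 ≤ S := Finset.sum_nonneg fun n _ => le_trans zero_le_one (hγ1 n)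
    have hεS : ε * S ≤ 4⁻¹ := by
      have h1 : ε ≤ (4*(S+1))⁻¹ := min_le_right _ _
      have h2 : S ≤ S + 1 := by linarith
      calc ε * S ≤ (4*(S+1))⁻¹ * (S+1) := mul_le_mul h1 h2 hS0 (by positivity)
        _ = 4⁻¹ := by field_simp
    have hγ0 : ∀ n, (0:ℝ) ≤ γ n := fun n => le_trans zero_le_one (hγ1 n)
    set V : Set (ℕ → AddCircle (1:ℝ)) :=
      ⋂ n ∈ Finset.range m, (fun a : ℕ → AddCircle (1:ℝ) => a n) ⁻¹'
        ((fun r : ℝ => ((r:ℝ) : AddCircle (1:ℝ))) '' Ioo (-ε) ε) with hVdef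
    have hVnhds : V ∈ 𝓝 (0 : ℕ → AddCircle (1:ℝ)) := by
      refine (Finset.range m).iInter_mem_sets.mpr fun n _ => ?_
      refine ContinuousAt.preimage_mem_nhds ((continuous_apply n).continuousAt) ?_
      have hopen : IsOpen ((fun r : ℝ => ((r:ℝ) : AddCircle (1:ℝ))) '' Ioo (-ε) ε) :=
        QuotientAddGroup.isOpenMap_coe _ isOpen_Ioo
      have h0mem : (0 : AddCircle (1:ℝ)) ∈
          ((fun r : ℝ => ((r:ℝ) : AddCircle (1:ℝ))) '' Ioo (-ε) ε) :=
        ⟨0, ⟨neg_lt_zero.mpr hεpos, hεpos⟩, by norm_num⟩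
      exact hopen.mem_nhds h0mem
    refine mem_of_superset hVnhds ?_
    intro a ha
    have hrepa : ∀ n, ∃ c : ℝ, |c| ≤ 1 ∧ ((c:ℝ) : AddCircle (1:ℝ)) = a n ∧
        (n < m → |c| ≤ ε) := by
      intro n
      by_cases hn : n < m
      · obtain ⟨r, hr, hra⟩ := Set.mem_iInter₂.mp ha n (Finset.mem_range.mpr hn)
        have habs : |r| < ε := abs_lt.mpr ⟨hr.1, hr.2⟩
        exact ⟨r, le_trans habs.le hε1, hra, fun _ => habs.le⟩
      · obtain ⟨c, hc1, hc2⟩ := hrep (a n)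
        exact ⟨c, hc1, hc2, fun h => absurd h hn⟩
    choose c hc1 hca hcε using hrepa
    have hsum := summable_coef hWn hWc hWb hWanti hWbasis hwW hxw hc1
    have hpartial : ∀ s : Finset ℕ, ∑ k ∈ s, c k • x k ∈ ((2:ℝ)⁻¹) • W m := by
      intro s
      set τ : ℕ → ℝ := fun k => if k < m then c k * γ k else c k * ((2:ℝ)⁻¹)^(k+2) with hτ
      set ω : ℕ → E := fun k => if k < m then w' k else w k with hω
      have hterm : ∀ k, c k • x k = ((2:ℝ)⁻¹) • ((2 * τ k) • ω k) := by
        intro k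
        by_cases hk : k < m
        · simp only [hτ, hω, if_pos hk]
          rw [← hw'x k, smul_smul, smul_smul]
          congr 1; ring
        · simp only [hτ, hω, if_neg hk]
          rw [hxw k, smul_smul, smul_smul]
          congr 1; ring
      rw [Finset.sum_congr rfl (fun k _ => hterm k), ← Finset.smul_sum]
      refine Set.smul_mem_smul_set ?_
      refine absconvex_sum_mem (hWc m) (hWb m) (mem_of_mem_nhds (hWn m)) s _ ω
        (fun k _ => ?_) ?_
      · by_cases hk : k < m
        · simp only [hω, if_pos hk]; exact hw'W k
        · simp only [hω, if_neg hk]; exact hWanti m k (by omega) (hwW k)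
      · have hsplit := Finset.sum_filter_add_sum_filter_not s (· < m) (fun k => |2 * τ k|)
        rw [← hsplit]
        have hb1 : ∑ k ∈ s.filter (· < m), |2 * τ k| ≤ 2⁻¹ := by
          have hsub : s.filter (· < m) ⊆ Finset.range m := by
            intro k hk
            exact Finset.mem_range.mpr (Finset.mem_filter.mp hk).2
          calc ∑ k ∈ s.filter (· < m), |2 * τ k|
              ≤ ∑ k ∈ s.filter (· < m), 2 * (ε * γ k) := by
                refine Finset.sum_le_sum fun k hk => ?_
                have hk' : k < m := (Finset.mem_filter.mp hk).2
                simp only [hτ, if_pos hk']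
                rw [abs_mul, abs_mul]
                have : |(2:ℝ)| = 2 := by norm_num
                rw [this, abs_of_nonneg (hγ0 k)]
                refine mul_le_mul_of_nonneg_left ?_ (by norm_num)
                exact mul_le_mul_of_nonneg_right (hcε k hk') (hγ0 k)
            _ ≤ ∑ k ∈ Finset.range m, 2 * (ε * γ k) :=
                Finset.sum_le_sum_of_subset_of_nonneg hsub
                  (fun i _ _ => mul_nonneg (by norm_num) (mul_nonneg hεpos.le (hγ0 i)))
            _ = 2 * ε * S := by
                rw [hS, Finset.mul_sum]
                exact Finset.sum_congr rfl fun k _ => by ring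
            _ ≤ 2⁻¹ := by nlinarith [hεS]
        have hb2 : ∑ k ∈ s.filter (fun k => ¬ k < m), |2 * τ k| ≤ 2⁻¹ := by
          have hge : ∀ k ∈ s.filter (fun k => ¬ k < m), m ≤ k := by
            intro k hk
            have := (Finset.mem_filter.mp hk).2
            omega
          calc ∑ k ∈ s.filter (fun k => ¬ k < m), |2 * τ k|
              ≤ ∑ k ∈ s.filter (fun k => ¬ k < m), 2⁻¹ * ((2:ℝ)⁻¹)^k := by
                refine Finset.sum_le_sum fun k hk => ?_
                have hk' : ¬ k < m := (Finset.mem_filter.mp hk).2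
                simp only [hτ, if_neg hk']
                rw [abs_mul, abs_mul]
                have h2 : |(2:ℝ)| = 2 := by norm_num
                have h3 : |((2:ℝ)⁻¹)^(k+2)| = ((2:ℝ)⁻¹)^(k+2) := abs_of_pos (by positivity)
                rw [h2, h3]
                calc 2 * (|c k| * ((2:ℝ)⁻¹)^(k+2)) ≤ 2 * (1 * ((2:ℝ)⁻¹)^(k+2)) := by
                      refine mul_le_mul_of_nonneg_left ?_ (by norm_num)
                      exact mul_le_mul_of_nonneg_right (hc1 k) (by positivity)
                  _ = 2⁻¹ * ((2:ℝ)⁻¹)^k := by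
                      rw [one_mul, pow_add]
                      ring
            _ = 2⁻¹ * ∑ k ∈ s.filter (fun k => ¬ k < m), ((2:ℝ)⁻¹)^k := by
                rw [Finset.mul_sum]
            _ ≤ 2⁻¹ * (2 * 2⁻¹^m) :=
                mul_le_mul_of_nonneg_left (geom_tail_bound _ hge) (by norm_num)
            _ ≤ 2⁻¹ := by
                have hm1 : 1 ≤ m := by omega
                have : ((2:ℝ)⁻¹)^m ≤ 2⁻¹^1 :=
                  pow_le_pow_of_le_one (by norm_num) (by norm_num) hm1
                simp only [pow_one] at this
                nlinarith
        linarith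
    have hx_mem : (∑' k, c k • x k) ∈ closure (((2:ℝ)⁻¹) • W m) :=
      mem_closure_of_tendsto hsum.hasSum (Filter.Eventually.of_forall hpartial)
    refine ⟨∑' k, c k • x k, hWmU (closure_half_subset (hWn m) (hWc m) (hWb m) hx_mem), ?_⟩
    funext n
    rw [hRapp, apply_tsum_coef hbi hsum n, hca]
  -- conclude openness
  have hopen : IsOpenMap R := by
    intro O hO
    rw [isOpen_iff_mem_nhds]
    rintro _ ⟨u, hu, rfl⟩
    have hT : ((u + ·) ⁻¹' O) ∈ 𝓝 (0:E) := by
      have := (hO.preimage (continuous_const.add continuous_id)).mem_nhds (x := (0:E)) (by simpa using hu)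
      exact this
    have h2 := key _ hT
    have h3 : (fun z => R u + z) '' (R '' ((u + ·) ⁻¹' O)) ⊆ R '' O := by
      rintro _ ⟨_, ⟨v, hv, rfl⟩, rfl⟩
      exact ⟨u + v, hv, by rw [map_add]⟩
    have h4 : (fun z => R u + z) '' (R '' ((u + ·) ⁻¹' O)) ∈ 𝓝 (R u) := by
      have h5 := (Homeomorph.addLeft (R u)).isOpenMap.image_mem_nhds h2
      have h6 : (Homeomorph.addLeft (R u)) 0 = R u := by simp
      rw [h6] at h5
      exact h5
    exact mem_of_superset h4 h3
  exact ⟨R, hcont, hsurj, hopen⟩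
end

section
/- Every infinite-dimensional real Banach space E has 𝕋^ω as a quotient group; that is, there exists a group homomorphism from (E, +) onto 𝕋^ω which is continuous, surjective, and an open map. -/
open Set Filter Topology

section Aux
variable {E : Type*} [NormedAddCommGroup E] [NormedSpace ℝ E]

/-- In an infinite-dimensional space, one can find a vector of any norm in the common
kernel of finitely many functionals. -/
lemma aux_exists_x (hd : ¬ FiniteDimensional ℝ E) (n : ℕ) (g : Fin n → (E →L[ℝ] ℝ)) :
    ∃ x : E, ‖x‖ = (2⁻¹ : ℝ) ^ n ∧ ∀ i, g i x = 0 := by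
  have : ∃ v : E, v ≠ 0 ∧ ∀ i, g i v = 0 := by
    by_contra h
    push_neg at h
    have hinj : Function.Injective (LinearMap.pi (fun i : Fin n => ((g i) : E →ₗ[ℝ] ℝ))) := by
      rw [← LinearMap.ker_eq_bot, LinearMap.ker_eq_bot']
      intro v hv
      by_contra hv0
      obtain ⟨i, hi⟩ := h v hv0
      exact hi (congrFun hv i)
    exact hd (FiniteDimensional.of_injective _ hinj)
  obtain ⟨v, hv0, hv⟩ := this
  have hvn : (0:ℝ) < ‖v‖ := norm_pos_iff.2 hv0
  refine ⟨((2⁻¹ : ℝ) ^ n / ‖v‖) • v, ?_, fun i => ?_⟩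
  · rw [norm_smul, Real.norm_eq_abs, abs_of_pos (by positivity), div_mul_cancel₀]
    exact hvn.ne'
  · rw [map_smul, hv i, smul_eq_mul, mul_zero]

/-- Hahn-Banach: a functional vanishing on a finite-dimensional subspace and taking
the value 1 at a point outside it. -/
lemma aux_exists_f [CompleteSpace E] (x : E) (F : Submodule ℝ E) [FiniteDimensional ℝ F]
    (hxF : x ∉ F) : ∃ f : E →L[ℝ] ℝ, f x = 1 ∧ ∀ v ∈ F, f v = 0 := by
  obtain ⟨f, u, hfu, hux⟩ := geometric_hahn_banach_closed_point F.convex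
    F.closed_of_finiteDimensional hxF
  have hF0 : ∀ v ∈ F, f v = 0 := by
    intro v hv
    by_contra hfv
    have h1 : ∀ t : ℝ, t * f v < u := fun t => by
      have := hfu (t • v) (F.smul_mem t hv); rwa [map_smul, smul_eq_mul] at this
    have := h1 ((u + 1) / f v)
    rw [div_mul_cancel₀ _ hfv] at this; linarith
  have hfx : f x ≠ 0 := by
    have h0 : (0 : ℝ) < u := by simpa using hfu 0 F.zero_mem
    exact ne_of_gt (h0.trans hux)
  exact ⟨(f x)⁻¹ • f, by simp [inv_mul_cancel₀ hfx], fun v hv => by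
    simp [hF0 v hv]⟩

end Aux

section Bio
variable {E : Type*} [NormedAddCommGroup E] [NormedSpace ℝ E]

lemma aux_step [CompleteSpace E] (hd : ¬ FiniteDimensional ℝ E) (n : ℕ)
    (v : Fin n → E × (E →L[ℝ] ℝ))
    (hv : ∀ i j : Fin n, (v i).2 (v j).1 = if i = j then 1 else 0) :
    ∃ p : E × (E →L[ℝ] ℝ), ‖p.1‖ = (2⁻¹ : ℝ) ^ n ∧ (∀ i, (v i).2 p.1 = 0) ∧
      p.2 p.1 = 1 ∧ ∀ i, p.2 (v i).1 = 0 := by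
  obtain ⟨x, hxn, hx0⟩ := aux_exists_x hd n (fun i => (v i).2)
  have hx_ne : x ≠ 0 := by
    intro h
    rw [h, norm_zero] at hxn
    exact (by positivity : (0:ℝ) < (2⁻¹:ℝ)^n).ne hxn
  set F := Submodule.span ℝ (Set.range (fun i => (v i).1)) with hF
  haveI : FiniteDimensional ℝ F := FiniteDimensional.span_of_finite _ (Set.finite_range _)
  have hxF : x ∉ F := by
    intro hx
    rw [hF, Submodule.mem_span_range_iff_exists_fun] at hx
    obtain ⟨c, hc⟩ := hx
    have hc0 : ∀ j, c j = 0 := by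
      intro j
      have := hx0 j
      rw [← hc, map_sum] at this
      simp only [map_smul, smul_eq_mul, hv j, mul_ite, mul_one, mul_zero] at this
      rwa [Finset.sum_ite_eq Finset.univ j (fun i => c i), if_pos (Finset.mem_univ j)] at this
    apply hx_ne
    rw [← hc]
    simp [hc0]
  obtain ⟨f, hf1, hf0⟩ := aux_exists_f x F hxF
  exact ⟨(x, f), hxn, hx0, hf1, fun i => hf0 _ (Submodule.subset_span ⟨i, rfl⟩)⟩

lemma exists_biorthogonal_s3 [CompleteSpace E] (hd : ¬ FiniteDimensional ℝ E) :
    ∃ (x : ℕ → E) (f : ℕ → (E →L[ℝ] ℝ)),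
      (∀ n, ‖x n‖ = (2⁻¹ : ℝ) ^ n) ∧ ∀ m n, f m (x n) = if m = n then 1 else 0 := by
  classical
  let T : (n : ℕ) → {v : Fin n → E × (E →L[ℝ] ℝ) //
      (∀ i : Fin n, ‖(v i).1‖ = (2⁻¹ : ℝ) ^ (i : ℕ)) ∧
      ∀ i j : Fin n, (v i).2 (v j).1 = if i = j then 1 else 0} :=
    fun n => Nat.rec
      ⟨fun i => i.elim0, fun i => i.elim0, fun i => i.elim0⟩
      (fun n prev => by
        refine ⟨Fin.snoc prev.1 (Classical.choose (aux_step hd n prev.1 prev.2.2)), ?_, ?_⟩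
        · obtain ⟨h1, -, -, -⟩ := Classical.choose_spec (aux_step hd n prev.1 prev.2.2)
          intro i
          refine Fin.lastCases ?_ (fun j => ?_) i
          · simpa [Fin.snoc_last] using h1
          · simpa [Fin.snoc_castSucc] using prev.2.1 j
        · obtain ⟨-, h2, h3, h4⟩ := Classical.choose_spec (aux_step hd n prev.1 prev.2.2)
          intro i j
          refine Fin.lastCases ?_ (fun i' => ?_) i <;> refine Fin.lastCases ?_ (fun j' => ?_) j
          · simpa [Fin.snoc_last] using h3
          · simp only [Fin.snoc_last, Fin.snoc_castSucc]
            rw [if_neg (Fin.castSucc_lt_last j').ne']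
            exact h4 j'
          · simp only [Fin.snoc_last, Fin.snoc_castSucc]
            rw [if_neg (Fin.castSucc_lt_last i').ne]
            exact h2 i'
          · simp only [Fin.snoc_castSucc]
            rw [prev.2.2 i' j']
            simp [Fin.castSucc_inj]) n
  have hcoh : ∀ n (i : Fin n), (T (n + 1)).1 i.castSucc = (T n).1 i := by
    intro n i
    have h : (T (n + 1)).1
        = Fin.snoc (T n).1 (Classical.choose (aux_step hd n (T n).1 (T n).2.2)) := rfl
    rw [h, Fin.snoc_castSucc]
  set p : ℕ → E × (E →L[ℝ] ℝ) := fun m => (T (m + 1)).1 (Fin.last m) with hp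
  have hall : ∀ n (i : Fin n), (T n).1 i = p (i : ℕ) := by
    intro n
    induction n with
    | zero => exact fun i => i.elim0
    | succ n ih =>
      intro i
      refine Fin.lastCases ?_ (fun j => ?_) i
      · rfl
      · rw [hcoh n j, ih j]
        simp
  refine ⟨fun m => (p m).1, fun m => (p m).2, fun m => ?_, fun m n => ?_⟩
  · have := (T (m + 1)).2.1 (Fin.last m)
    rwa [hall (m + 1) (Fin.last m), Fin.val_last] at this
  · have hm : m < max m n + 1 := Nat.lt_succ_of_le (le_max_left m n)
    have hn : n < max m n + 1 := Nat.lt_succ_of_le (le_max_right m n)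
    have := (T (max m n + 1)).2.2 ⟨m, hm⟩ ⟨n, hn⟩
    rw [hall _ ⟨m, hm⟩, hall _ ⟨n, hn⟩] at this
    simpa [Fin.ext_iff] using this

end Bio

/-- Every infinite-dimensional real Banach space `E` has `𝕋^ω` as a quotient group:
there is a continuous, surjective, open group homomorphism from `(E, +)` onto
`ℕ → AddCircle (1 : ℝ)`. -/
theorem banach_space_has_torus_quotient
    (E : Type*) [NormedAddCommGroup E] [NormedSpace ℝ E] [CompleteSpace E]
    (h_infdim : ¬ FiniteDimensional ℝ E) :
    ∃ R : E →+ (ℕ → AddCircle (1 : ℝ)),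
      Continuous R ∧ Function.Surjective R ∧ IsOpenMap R := by
  classical
  haveI : Fact ((0:ℝ) < 1) := ⟨one_pos⟩
  obtain ⟨x, f, hxn, hbio⟩ := exists_biorthogonal_s3 h_infdim
  -- basic summability
  have hsum : ∀ t : ℕ → ℝ, (∀ n, |t n| ≤ 1) → Summable (fun n => t n • x n) := by
    intro t ht
    refine Summable.of_norm_bounded (g := fun n => (2⁻¹ : ℝ) ^ n)
      (summable_geometric_of_lt_one (by norm_num) (by norm_num)) (fun n => ?_)
    rw [norm_smul, Real.norm_eq_abs, hxn n]
    calc |t n| * (2⁻¹:ℝ)^n ≤ 1 * (2⁻¹:ℝ)^n :=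
          mul_le_mul_of_nonneg_right (ht n) (by positivity)
      _ = (2⁻¹:ℝ)^n := one_mul _
  -- evaluation of the functionals on the sums
  have heval : ∀ t : ℕ → ℝ, (∀ n, |t n| ≤ 1) → ∀ m, f m (∑' n, t n • x n) = t m := by
    intro t ht m
    rw [ContinuousLinearMap.map_tsum _ (hsum t ht)]
    have h1 : ∀ n, f m (t n • x n) = if n = m then t m else 0 := by
      intro n
      rw [map_smul, smul_eq_mul, hbio m n]
      rcases eq_or_ne n m with h | h
      · simp [h]
      · simp [h, Ne.symm h]
    rw [tsum_congr h1, tsum_ite_eq]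
  -- norm bound on the sums
  have hnorm : ∀ t : ℕ → ℝ, (∀ n, |t n| ≤ 1) → ∀ (N : ℕ) (δ : ℝ), 0 ≤ δ →
      (∀ n < N, |t n| ≤ δ) → ‖∑' n, t n • x n‖ ≤ 2 * δ + (2⁻¹:ℝ)^N * 2 := by
    intro t ht N δ hδ hsmall
    set c : ℕ → ℝ := fun n => (if n < N then δ else 1) * (2⁻¹:ℝ)^n with hc
    have hcnn : ∀ n, 0 ≤ c n := by
      intro n; rw [hc]
      by_cases h : n < N <;> simp [h, hδ] <;> positivity
    have hsc : Summable c := by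
      refine Summable.of_norm_bounded (g := fun n => (δ + 1) * (2⁻¹:ℝ)^n)
        ((summable_geometric_of_lt_one (by norm_num) (by norm_num)).mul_left _) (fun n => ?_)
      rw [Real.norm_eq_abs, abs_of_nonneg (hcnn n), hc]
      refine mul_le_mul_of_nonneg_right ?_ (by positivity)
      by_cases h : n < N <;> simp [h] <;> linarith
    have hb : ∀ n, ‖t n • x n‖ ≤ c n := by
      intro n
      rw [norm_smul, Real.norm_eq_abs, hxn n, hc]
      refine mul_le_mul_of_nonneg_right ?_ (by positivity)
      by_cases h : n < N
      · simpa [h] using hsmall n h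
      · simpa [h] using ht n
    have hsn : Summable (fun n => ‖t n • x n‖) :=
      Summable.of_nonneg_of_le (fun n => norm_nonneg _) hb hsc
    have step1 : ‖∑' n, t n • x n‖ ≤ ∑' n, c n :=
      (norm_tsum_le_tsum_norm hsn).trans (Summable.tsum_le_tsum hb hsn hsc)
    refine step1.trans ?_
    rw [← Summable.sum_add_tsum_nat_add N hsc]
    have e1 : ∑ i ∈ Finset.range N, c i ≤ 2 * δ := by
      have : ∀ i ∈ Finset.range N, c i = δ * (2⁻¹:ℝ)^i := by
        intro i hi
        rw [hc]; simp [Finset.mem_range.1 hi]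
      rw [Finset.sum_congr rfl this, ← Finset.mul_sum]
      calc δ * ∑ i ∈ Finset.range N, (2⁻¹:ℝ)^i ≤ δ * 2 := by
            refine mul_le_mul_of_nonneg_left ?_ hδ
            simpa [one_div] using sum_geometric_two_le N
        _ = 2 * δ := mul_comm _ _
    have e2 : ∑' i : ℕ, c (i + N) = (2⁻¹:ℝ)^N * 2 := by
      have : ∀ i : ℕ, c (i + N) = (2⁻¹:ℝ)^N * (2⁻¹:ℝ)^i := by
        intro i
        rw [hc]
        have : ¬ (i + N < N) := by omega
        simp [this, pow_add]; ring
      rw [tsum_congr this, tsum_mul_left, tsum_geometric_of_lt_one (by norm_num) (by norm_num)]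
      norm_num
    rw [e2]
    linarith
  -- the homomorphism as a raw function
  set Rf : E → (ℕ → AddCircle (1:ℝ)) := fun e n => ((f n e : ℝ) : AddCircle (1:ℝ)) with hRf
  have hadd : ∀ a b : E, Rf (a + b) = Rf a + Rf b := by
    intro a b
    funext n
    simp only [hRf, map_add, Pi.add_apply]
    exact AddCircle.coe_add (p := (1:ℝ)) _ _
  -- the key neighbourhood property
  have hball : ∀ ε : ℝ, 0 < ε → Rf '' Metric.ball 0 ε ∈ 𝓝 (0 : ℕ → AddCircle (1:ℝ)) := by
    intro ε hε
    obtain ⟨N, hN⟩ := exists_pow_lt_of_lt_one (show (0:ℝ) < ε/8 by linarith)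
      (show (2⁻¹:ℝ) < 1 by norm_num)
    set δ : ℝ := min (ε/8) 1 with hδdef
    have hδpos : 0 < δ := lt_min (by linarith) one_pos
    have hδ1 : δ ≤ 1 := min_le_right _ _
    have hδε : δ ≤ ε/8 := min_le_left _ _
    set V : Set (AddCircle (1:ℝ)) := ((↑) : ℝ → AddCircle (1:ℝ)) '' Metric.ball 0 δ with hV
    have hVnhds : V ∈ 𝓝 (0 : AddCircle (1:ℝ)) := by
      have hopen : IsOpen V := QuotientAddGroup.isOpenMap_coe _ Metric.isOpen_ball
      exact hopen.mem_nhds ⟨0, Metric.mem_ball_self hδpos, rfl⟩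
    refine Filter.mem_of_superset
      (set_pi_mem_nhds (Set.finite_Iio N) (fun n _ => hVnhds)) ?_
    rintro y hy
    -- choose representatives
    have hrep : ∀ n, ∃ r : ℝ, |r| ≤ 1 ∧ (n < N → |r| ≤ δ) ∧ (r : AddCircle (1:ℝ)) = y n := by
      intro n
      by_cases h : n < N
      · obtain ⟨r, hr, hry⟩ := hy n h
        rw [Metric.mem_ball, dist_zero_right, Real.norm_eq_abs] at hr
        exact ⟨r, hr.le.trans hδ1, fun _ => hr.le, hry⟩
      · obtain ⟨r, hr, hry⟩ := AddCircle.eq_coe_Ico (y n)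
        refine ⟨r, ?_, fun hn => absurd hn h, hry⟩
        rw [abs_of_nonneg hr.1]
        exact hr.2.le
    choose t ht1 htδ hty using hrep
    refine ⟨∑' n, t n • x n, ?_, ?_⟩
    · rw [Metric.mem_ball, dist_zero_right]
      have := hnorm t ht1 N δ hδpos.le (fun n hn => htδ n hn)
      have h2 : (2⁻¹:ℝ)^N < ε/8 := hN
      calc ‖∑' n, t n • x n‖ ≤ 2 * δ + (2⁻¹:ℝ)^N * 2 := this
        _ < ε := by linarith
    · funext n
      simp only [hRf, heval t ht1 n]
      exact hty n
  -- assemble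
  refine ⟨{ toFun := Rf,
            map_zero' := by funext n; simp [hRf],
            map_add' := hadd }, ?_, ?_, ?_⟩
  · -- continuity
    refine continuous_pi (fun n => ?_)
    exact Continuous.comp continuous_quotient_mk' (f n).continuous
  · -- surjectivity
    intro y
    have hrep : ∀ n, ∃ r : ℝ, |r| ≤ 1 ∧ (r : AddCircle (1:ℝ)) = y n := by
      intro n
      obtain ⟨r, hr, hry⟩ := AddCircle.eq_coe_Ico (y n)
      exact ⟨r, by rw [abs_of_nonneg hr.1]; exact hr.2.le, hry⟩
    choose t ht1 hty using hrep
    refine ⟨∑' n, t n • x n, ?_⟩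
    funext n
    simp only [AddMonoidHom.coe_mk, ZeroHom.coe_mk, hRf, heval t ht1 n]
    exact hty n
  · -- openness
    intro U hU
    rw [isOpen_iff_mem_nhds]
    rintro z ⟨e, heU, rfl⟩
    obtain ⟨ε, hε, hballU⟩ := Metric.isOpen_iff.1 hU e heU
    have h0 : Rf '' Metric.ball 0 ε ∈ 𝓝 (0 : ℕ → AddCircle (1:ℝ)) := hball ε hε
    have h1 : (fun w => Rf e + w) '' (Rf '' Metric.ball 0 ε) ∈ 𝓝 (Rf e) := by
      have := (Homeomorph.addLeft (Rf e)).map_nhds_eq (0 : ℕ → AddCircle (1:ℝ))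
      have h2 : (fun w => Rf e + w) '' (Rf '' Metric.ball 0 ε) ∈
          Filter.map (Homeomorph.addLeft (Rf e)) (𝓝 0) := Filter.image_mem_map h0
      rw [this] at h2
      simpa using h2
    refine Filter.mem_of_superset h1 ?_
    rintro w ⟨v, ⟨b, hb, rfl⟩, rfl⟩
    refine ⟨e + b, hballU ?_, by
      simp only [AddMonoidHom.coe_mk, ZeroHom.coe_mk]
      exact hadd e b⟩
    have hbn : ‖b‖ < ε := by rw [Metric.mem_ball, dist_zero_right] at hb; exact hb
    rw [Metric.mem_ball, dist_eq_norm]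
    simpa using hbn
end

section
/- Let E be the vector space ℓ∞ of bounded real sequences, regarded as a linear subspace of ℝ^ω = (ℕ → ℝ) and equipped with the topology induced from the product topology on ℝ^ω. Then every vector subspace F of E that is complete with respect to the uniformity induced from ℝ^ω is finite-dimensional. In particular, E does not contain an infinite-dimensional Fréchet subspace. -/
/-!
By Baire's theorem applied to the complete metrizable space `F`, covered by the closed sets
`{x | ∀ i, |x i| ≤ n}`, one of them contains a nonempty relatively open subset of `F`. In the
product topology such a set contains the slice of `F` of all `y` agreeing with some `x₀ ∈ F` on a
finite set `s` of coordinates. If `x ∈ F` vanishes on `s`, the whole line `x₀ + t • x` lies in that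
bounded slice, which forces `x = 0`. Hence restriction to `s` is injective on `F`.
-/

open Set Filter Topology

theorem exists_eventually_abs_le_of_baireSpace {X ι : Type*} [TopologicalSpace X] [BaireSpace X]
    [Nonempty X] {f : X → ι → ℝ} (hf : Continuous f) (hbdd : ∀ x, ∃ C : ℝ, ∀ i, |f x i| ≤ C) :
    ∃ x₀ : X, ∃ C : ℝ, ∀ᶠ x in 𝓝 x₀, ∀ i, |f x i| ≤ C := by
  have hclosed (n : ℕ) : IsClosed {x | ∀ i, |f x i| ≤ n} := by
    simp only [ofPred_forall]
    exact isClosed_iInter fun i => isClosed_le ((continuous_apply i).comp hf).abs continuous_const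
  have hcover : ⋃ n : ℕ, {x | ∀ i, |f x i| ≤ n} = univ := by
    refine eq_univ_of_forall fun x => mem_iUnion.2 ?_
    obtain ⟨C, hC⟩ := hbdd x
    obtain ⟨n, hn⟩ := exists_nat_ge C
    exact ⟨n, fun i => (hC i).trans hn⟩
  obtain ⟨n, x₀, hx₀⟩ := nonempty_interior_of_iUnion_of_closed hclosed hcover
  exact ⟨x₀, n, mem_interior_iff_mem_nhds.1 hx₀⟩

theorem exists_finset_eqOn_subset_of_mem_nhds {ι X : Type*} [TopologicalSpace X] {x₀ : ι → X}
    {U : Set (ι → X)} (hU : U ∈ 𝓝 x₀) :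
    ∃ s : Finset ι, {x | EqOn x x₀ s} ⊆ U := by
  rw [nhds_pi] at hU
  obtain ⟨s, u, hu, hsu⟩ := mem_pi'.1 hU
  refine ⟨s, fun x hx => hsu fun i hi => ?_⟩
  rw [hx hi]
  exact mem_of_mem_nhds (hu i)

theorem eq_zero_of_forall_abs_add_mul_le {a b C : ℝ} (h : ∀ t : ℝ, |a + t * b| ≤ C) : b = 0 := by
  by_contra hb
  have hline : a + (C + 1 - a) / b * b = C + 1 := by field_simp; ring
  have := h ((C + 1 - a) / b)
  rw [hline] at this
  linarith [le_abs_self (C + 1)]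

namespace Submodule

theorem eq_zero_of_eqOn_zero_of_bounded_slice {ι : Type*} {F : Submodule ℝ (ι → ℝ)} {s : Set ι}
    {x₀ : ι → ℝ} (hx₀ : x₀ ∈ F) {C : ℝ} (hslice : ∀ y ∈ F, EqOn y x₀ s → ∀ i, |y i| ≤ C)
    {x : ι → ℝ} (hx : x ∈ F) (hxs : EqOn x 0 s) : x = 0 := by
  funext i
  refine eq_zero_of_forall_abs_add_mul_le (a := x₀ i) (C := C) fun t => ?_
  have hline : x₀ + t • x ∈ F := F.add_mem hx₀ (F.smul_mem t hx)
  exact hslice _ hline (fun j hj => by simp [hxs hj]) i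

theorem finiteDimensional_of_eqOn_zero {K ι : Type*} [Field K] {F : Submodule K (ι → K)}
    (s : Finset ι) (h : ∀ x ∈ F, EqOn x 0 s → x = 0) : FiniteDimensional K F := by
  let restrict : F →ₗ[K] s → K := (LinearMap.funLeft K K ((↑) : s → ι)).comp F.subtype
  refine FiniteDimensional.of_injective restrict ?_
  rw [← LinearMap.ker_eq_bot, LinearMap.ker_eq_bot']
  intro x hx
  exact Subtype.ext <| h x x.2 fun i hi => congrFun hx ⟨i, hi⟩

end Submodule

/-- Let `E = ℓ∞` be the space of bounded real sequences regarded as a linear subspace of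
`ℝ^ω = (ℕ → ℝ)` with the induced (product) topology.  Every vector subspace `F` of `E`
(i.e. every submodule of `ℕ → ℝ` consisting of bounded sequences) that is complete with
respect to the uniformity induced from `ℝ^ω` is finite-dimensional.  In particular `E`
does not contain an infinite-dimensional Fréchet subspace. -/
theorem complete_subspace_of_linfty_in_product_topology_finiteDimensional
    (F : Submodule ℝ (ℕ → ℝ))
    (hF_bdd : ∀ x ∈ F, ∃ C : ℝ, ∀ n : ℕ, |x n| ≤ C)
    (hF_complete : IsComplete (F : Set (ℕ → ℝ))) :
    FiniteDimensional ℝ F := by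
  -- The Baire-space instance is found for the set coercion, not for the submodule coercion `↥F`.
  have : CompleteSpace (F : Set (ℕ → ℝ)) := hF_complete.completeSpace_coe
  have : Nonempty (F : Set (ℕ → ℝ)) := ⟨0, F.zero_mem⟩
  obtain ⟨x₀, C, hC⟩ := exists_eventually_abs_le_of_baireSpace
    (f := ((↑) : ↥(F : Set (ℕ → ℝ)) → ℕ → ℝ))
    continuous_subtype_val fun x => hF_bdd x x.2
  obtain ⟨U, hU, hUC⟩ := (mem_nhds_subtype _ _ _).1 hC
  obtain ⟨s, hs⟩ := exists_finset_eqOn_subset_of_mem_nhds hU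
  have hslice : ∀ y ∈ F, EqOn y x₀ s → ∀ i, |y i| ≤ C := fun y hy hyx =>
    @hUC ⟨y, hy⟩ (hs hyx)
  exact Submodule.finiteDimensional_of_eqOn_zero s fun x hx hxs =>
    Submodule.eq_zero_of_eqOn_zero_of_bounded_slice x₀.2 hslice hx hxs
end

section
/- Let F be a vector subspace of ℓ∞ (the space of bounded real sequences) which is complete with respect to the uniformity induced from the product topology on ℝ^ω = (ℕ → ℝ). Then the topology on F induced from the product topology of ℝ^ω coincides with the topology on F induced by the supremum norm ‖x‖ = sup_n |x_n|; in particular, F with the induced topology is a Banach space. -/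
/-!
`F` is complete and metrizable, hence a Baire space, hence barrelled. On `F` the supremum norm is
a supremum of coordinate seminorms, which are continuous for the product topology, so it is a
lower semicontinuous seminorm and therefore continuous: the inclusion `F → ℓ∞` is continuous.
Its inverse is continuous because coordinates are continuous on `ℓ∞`, and an additive topological
embedding is a uniform embedding, so its image is complete.
-/

open scoped ENNReal Uniformity

theorem LinearMap.continuous_of_lowerSemicontinuous_norm {𝕜 E G : Type*} [NormedField 𝕜]
    [AddCommGroup E] [Module 𝕜 E] [TopologicalSpace E] [IsTopologicalAddGroup E]
    [BarrelledSpace 𝕜 E] [SeminormedAddCommGroup G] [NormedSpace 𝕜 G] (T : E →ₗ[𝕜] G)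
    (hT : LowerSemicontinuous fun x => ‖T x‖) : Continuous T := by
  have hp : Continuous ((normSeminorm 𝕜 G).comp T) :=
    Seminorm.continuous_of_lowerSemicontinuous _ hT
  refine continuous_of_continuousAt_zero T ?_
  rw [ContinuousAt, map_zero, tendsto_zero_iff_norm_tendsto_zero]
  exact hp.tendsto' 0 0 (map_zero _)

theorem lp.lowerSemicontinuous_norm_comp {X ι : Type*} {E : ι → Type*} [TopologicalSpace X]
    [∀ i, NormedAddCommGroup (E i)] (f : X → lp E ∞) (hf : ∀ i, Continuous fun x => f x i) :
    LowerSemicontinuous fun x => ‖f x‖ := by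
  simp_rw [lp.norm_eq_ciSup]
  exact lowerSemicontinuous_ciSup (fun x => (f x).prop.bddAbove)
    fun i => (hf i).norm.lowerSemicontinuous

def Submodule.inclusionLpInfty {𝕜 ι : Type*} {E : ι → Type*} [NormedField 𝕜]
    [∀ i, NormedAddCommGroup (E i)] [∀ i, NormedSpace 𝕜 (E i)] (F : Submodule 𝕜 (∀ i, E i))
    (hF : ∀ x ∈ F, Memℓp x ∞) : F →ₗ[𝕜] lp E ∞ where
  toFun x := ⟨(x : ∀ i, E i), hF x x.2⟩
  map_add' _ _ := rfl
  map_smul' _ _ := rfl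

theorem Submodule.isUniformInducing_inclusionLpInfty {𝕜 ι : Type*} {E : ι → Type*}
    [NontriviallyNormedField 𝕜] [Countable ι] [∀ i, NormedAddCommGroup (E i)]
    [∀ i, NormedSpace 𝕜 (E i)] (F : Submodule 𝕜 (∀ i, E i)) (hF : ∀ x ∈ F, Memℓp x ∞)
    (hF_complete : IsComplete (F : Set (∀ i, E i))) :
    IsUniformInducing (F.inclusionLpInfty hF) := by
  have : CompleteSpace F := hF_complete.completeSpace_coe
  have : (𝓤 F).IsCountablyGenerated := Filter.comap.isCountablyGenerated _ _
  have : IsUniformAddGroup F := .comap F.subtype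
  have hcont : Continuous (F.inclusionLpInfty hF) :=
    LinearMap.continuous_of_lowerSemicontinuous_norm _ <| lp.lowerSemicontinuous_norm_comp _
      fun i => (continuous_apply i).comp continuous_subtype_val
  exact AddMonoidHom.isUniformInducing_of_isInducing <|
    .of_comp hcont lp.uniformContinuous_coe.continuous .subtypeVal

/-- Let `F` be a vector subspace of `ℓ∞` (the bounded real sequences) which is complete
with respect to the uniformity induced from the product topology on `ℝ^ω = ℕ → ℝ`.
Then the topology on `F` induced from the product topology coincides with the topology
induced by the supremum norm, i.e. the natural inclusion of `F` (with the product-induced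
topology) into the Banach space `ℓ^∞(ℕ)` is inducing; moreover its range is complete,
so `F` with the supremum norm is a Banach space. -/
theorem complete_subspace_of_linfty_product_topology_is_sup_norm_topology
    (F : Submodule ℝ (ℕ → ℝ))
    (hF_bdd : ∀ x ∈ F, ∃ C : ℝ, ∀ n : ℕ, |x n| ≤ C)
    (hF_complete : IsComplete (F : Set (ℕ → ℝ))) :
    Topology.IsInducing (fun x : F =>
      (⟨(x : ℕ → ℝ), memℓp_infty (by
          obtain ⟨C, hC⟩ := hF_bdd x.1 x.2
          exact ⟨C, by rintro r ⟨n, rfl⟩; simpa [Real.norm_eq_abs] using hC n⟩)⟩ :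
        lp (fun _ : ℕ => ℝ) ∞)) ∧
    IsComplete (Set.range (fun x : F =>
      (⟨(x : ℕ → ℝ), memℓp_infty (by
          obtain ⟨C, hC⟩ := hF_bdd x.1 x.2
          exact ⟨C, by rintro r ⟨n, rfl⟩; simpa [Real.norm_eq_abs] using hC n⟩)⟩ :
        lp (fun _ : ℕ => ℝ) ∞))) := by
  have hF_mem : ∀ x ∈ F, Memℓp x ∞ := fun x hx =>
    let ⟨C, hC⟩ := hF_bdd x hx
    memℓp_infty ⟨C, by rintro _ ⟨n, rfl⟩; simpa [Real.norm_eq_abs] using hC n⟩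
  have : CompleteSpace F := hF_complete.completeSpace_coe
  have h := F.isUniformInducing_inclusionLpInfty hF_mem hF_complete
  exact ⟨h.isInducing, h.isComplete_range⟩
end

section
/- Let E be the vector space ℓ∞ of bounded real sequences equipped with the topology induced from the product topology on ℝ^ω = (ℕ → ℝ). The map T : E → 𝕋^ω defined coordinatewise by sending x = (x_n) to the sequence of residues (x_n mod ℤ)_n (equivalently, (e^{2πi x_n})_n) is a group homomorphism that is continuous, surjective, and an open map; hence E has 𝕋^ω as a quotient group. -/
/-- `ℓ∞`, the space of bounded real sequences, as a linear subspace of `ℝ^ω = ℕ → ℝ`;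
as a topological space it carries the topology induced from the product topology. -/
def boundedSequences : Submodule ℝ (ℕ → ℝ) where
  carrier := { x | ∃ C : ℝ, ∀ n : ℕ, |x n| ≤ C }
  zero_mem' := ⟨0, fun n => by simp⟩
  add_mem' := by
    rintro x y ⟨C, hC⟩ ⟨D, hD⟩
    exact ⟨C + D, fun n => (abs_add_le _ _).trans (add_le_add (hC n) (hD n))⟩
  smul_mem' := by
    rintro c x ⟨C, hC⟩
    exact ⟨|c| * C, fun n => by
      rw [Pi.smul_apply, smul_eq_mul, abs_mul]
      exact mul_le_mul_of_nonneg_left (hC n) (abs_nonneg c)⟩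

/-! Every point of the circle has a representative in `[0, p)`, so every point of the torus
lifts to a bounded sequence. A basic open set of `ℝ^ω` constrains only finitely many
coordinates, and changing finitely many coordinates of a bounded sequence keeps it bounded;
hence the reduction map sends basic open cylinders of `ℓ∞` onto open cylinders of the torus. -/

open Set

namespace boundedSequences

theorem piecewise_mem (I : Finset ℕ) [∀ n, Decidable (n ∈ I)] (f : ℕ → ℝ) {g : ℕ → ℝ}
    (hg : g ∈ boundedSequences) : I.piecewise f g ∈ boundedSequences := by
  obtain ⟨C, hC⟩ := hg
  have hC₀ : 0 ≤ C := (abs_nonneg _).trans (hC 0)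
  have hsum₀ : 0 ≤ ∑ m ∈ I, |f m| := I.sum_nonneg fun m _ => abs_nonneg _
  refine ⟨C + ∑ m ∈ I, |f m|, fun n => ?_⟩
  by_cases hn : n ∈ I
  · rw [I.piecewise_eq_of_mem _ _ hn]
    linarith [I.single_le_sum (fun m _ => abs_nonneg (f m)) hn]
  · rw [I.piecewise_eq_of_notMem _ _ hn]
    linarith [hC n]

variable (p : ℝ)

def toAddCircle : boundedSequences →+ (ℕ → AddCircle p) where
  toFun x n := (x : ℕ → ℝ) n
  map_zero' := by ext; simp
  map_add' x y := by ext; simp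

theorem continuous_toAddCircle : Continuous (toAddCircle p) :=
  continuous_pi fun n =>
    (AddCircle.continuous_mk' p).comp ((continuous_apply n).comp continuous_subtype_val)

variable [Fact (0 < p)]

theorem exists_lift (z : ℕ → AddCircle p) :
    ∃ x ∈ boundedSequences, ∀ n, (x n : AddCircle p) = z n := by
  refine ⟨fun n => AddCircle.equivIco p 0 (z n), ⟨p, fun n => ?_⟩,
    fun n => (AddCircle.equivIco p 0).symm_apply_apply (z n)⟩
  obtain ⟨h₀, h₁⟩ := (AddCircle.equivIco p 0 (z n)).2
  rw [abs_le]
  constructor <;> linarith [(Fact.out : 0 < p)]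

theorem surjective_toAddCircle : Function.Surjective (toAddCircle p) := fun z => by
  obtain ⟨x, hx, hxz⟩ := exists_lift p z
  exact ⟨⟨x, hx⟩, funext hxz⟩

/-- Fix the coordinates in `I` and fill in the others with a bounded lift. -/
theorem pi_image_coe_subset_image_toAddCircle (I : Finset ℕ) (u : ℕ → Set ℝ) :
    (I : Set ℕ).pi (fun n => ((↑) : ℝ → AddCircle p) '' u n) ⊆
      toAddCircle p '' {x | (x : ℕ → ℝ) ∈ (I : Set ℕ).pi u} := by
  classical
  intro z hz
  rw [← piMap_image_pi (fun n _ => QuotientAddGroup.mk_surjective)] at hz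
  obtain ⟨r, hr, rfl⟩ := hz
  obtain ⟨b, hb, hbz⟩ := exists_lift p (Pi.map (fun _ => ((↑) : ℝ → AddCircle p)) r)
  refine ⟨⟨I.piecewise r b, piecewise_mem I r hb⟩, fun n hn => ?_, funext fun n => ?_⟩
  · simpa [I.piecewise_eq_of_mem _ _ (Finset.mem_coe.1 hn)] using hr n hn
  · by_cases hn : n ∈ I
    · simp [toAddCircle, I.piecewise_eq_of_mem _ _ hn]
    · simp [toAddCircle, I.piecewise_eq_of_notMem _ _ hn, hbz n]

theorem isOpenMap_toAddCircle : IsOpenMap (toAddCircle p) := by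
  rintro _ ⟨V, hV, rfl⟩
  rw [isOpen_iff_forall_mem_open]
  rintro _ ⟨x, hxV, rfl⟩
  obtain ⟨I, u, hu, hIuV⟩ := isOpen_pi_iff.mp hV _ hxV
  refine ⟨_, (pi_image_coe_subset_image_toAddCircle p I u).trans (image_mono fun y hy => hIuV hy),
    isOpen_set_pi I.finite_toSet fun n hn => QuotientAddGroup.isOpenMap_coe _ (hu n hn).1,
    fun n hn => ⟨_, (hu n hn).2, rfl⟩⟩

end boundedSequences

/-- Let `E = ℓ∞` with the topology induced from the product topology on `ℝ^ω`.
The coordinatewise reduction map `T : E → 𝕋^ω`, `(x_n)_n ↦ (x_n mod ℤ)_n`, is a group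
homomorphism which is continuous, surjective and open; hence `E` has `𝕋^ω` as a
quotient group. -/
theorem linfty_product_topology_has_torus_quotient :
    ∃ T : boundedSequences →+ (ℕ → AddCircle (1 : ℝ)),
      (∀ (x : boundedSequences) (n : ℕ), T x n = ((x : ℕ → ℝ) n : AddCircle (1 : ℝ))) ∧
      Continuous T ∧ Function.Surjective T ∧ IsOpenMap T :=
  ⟨boundedSequences.toAddCircle 1, fun _ _ => rfl, boundedSequences.continuous_toAddCircle 1,
    boundedSequences.surjective_toAddCircle 1, boundedSequences.isOpenMap_toAddCircle 1⟩
end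

section
/- Let φ be the strong dual of ℝ^ω, i.e. the space of continuous linear functionals on ℕ → ℝ equipped with the topology of uniform convergence on (von Neumann) bounded subsets of ℝ^ω. Then there is no continuous surjective additive group homomorphism from φ onto 𝕋^ω. -/
open Set

local notation "𝕋" => AddCircle (1:ℝ)

lemma coe_int_of_coe_eq_zero {x : ℝ} (h : (x : 𝕋) = 0) : ∃ z : ℤ, x = z := by
  rw [AddCircle.coe_eq_zero_iff] at h
  obtain ⟨z, hz⟩ := h
  exact ⟨z, by simpa using hz.symm⟩

lemma int_abs_lt_one {z : ℤ} (h : |(z : ℝ)| < 1) : (z : ℝ) = 0 := by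
  have h1 : |z| < 1 := by exact_mod_cast (by rwa [← Int.cast_abs] at h : ((|z| : ℤ) : ℝ) < 1)
  have h2 : z = 0 := by rw [← Int.abs_lt_one_iff]; exact h1
  simp [h2]

section Lift
variable {E : Type*} [NormedAddCommGroup E] [NormedSpace ℝ E]

/-- A continuous additive hom from a real normed space to `𝕋 = ℝ/ℤ` lifts to a
continuous linear functional. -/
theorem exists_lift (ψ : E →+ 𝕋) (hψ : Continuous ψ) :
    ∃ F : E →L[ℝ] ℝ, ∀ x, ((F x : ℝ) : 𝕋) = ψ x := by
  classical
  -- the representative map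
  set r : 𝕋 → ℝ := fun q => ((AddCircle.equivIco 1 (-(1/2)) q : ℝ)) with hr
  have hrq : ∀ q : 𝕋, ((r q : ℝ) : 𝕋) = q := fun q => (AddCircle.equivIco 1 (-(1/2))).symm_apply_apply q
  have hrmem : ∀ q : 𝕋, r q ∈ Ico (-(1/2) : ℝ) (-(1/2) + 1) := fun q => (AddCircle.equivIco 1 (-(1/2)) q).2
  have hrsec : ∀ y : ℝ, y ∈ Ico (-(1/2) : ℝ) (-(1/2) + 1) → r ((y : ℝ) : 𝕋) = y := by
    intro y hy
    have := hrq ((y : ℝ) : 𝕋)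
    exact (AddCircle.coe_eq_coe_iff_of_mem_Ico (hrmem _) hy).1 this
  -- the good open set
  set U : Set 𝕋 := (fun x : ℝ => (x : 𝕋)) '' Ioo (-(1/4)) (1/4) with hU
  have hUopen : IsOpen U := by
    apply QuotientAddGroup.isOpenMap_coe
    exact isOpen_Ioo
  have hU0 : (0 : 𝕋) ∈ U := ⟨0, by norm_num, by norm_num⟩
  have hfU : ∀ q ∈ U, |r q| < 1/4 := by
    rintro q ⟨y, hy, rfl⟩
    rw [hrsec y (by constructor <;> [linarith [hy.1]; linarith [hy.2]])]
    rw [abs_lt]; exact ⟨by linarith [hy.1], hy.2⟩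
  have hUne : ∀ q ∈ U, q ≠ ((-(1/2) : ℝ) : 𝕋) := by
    rintro q ⟨y, hy, rfl⟩ hq
    simp only [] at hq
    have h0 : ((y - -(1/2) : ℝ) : 𝕋) = 0 := by
      rw [AddCircle.coe_sub, hq, sub_self]
    obtain ⟨z, hz⟩ := coe_int_of_coe_eq_zero h0
    have h1 : (0:ℝ) < z := by rw [← hz]; linarith [hy.1]
    have h2 : (z:ℝ) < 1 := by rw [← hz]; linarith [hy.2]
    have h1' : (0:ℤ) < z := by exact_mod_cast h1
    have h2' : z < 1 := by exact_mod_cast h2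
    omega
  -- δ
  obtain ⟨δ, hδpos, hδ⟩ : ∃ δ > 0, ∀ x : E, ‖x‖ < δ → ψ x ∈ U := by
    have : ψ ⁻¹' U ∈ nhds (0 : E) := by
      apply (hUopen.preimage hψ).mem_nhds
      simp only [mem_preimage, map_zero]; exact hU0
    obtain ⟨δ, hδpos, hball⟩ := Metric.mem_nhds_iff.1 this
    exact ⟨δ, hδpos, fun x hx => hball (by simpa [dist_eq_norm] using hx)⟩
  -- the local lift
  set f : E → ℝ := fun x => r (ψ x) with hfdef
  have hfcoe : ∀ x, ((f x : ℝ) : 𝕋) = ψ x := fun x => hrq (ψ x)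
  have hfsmall : ∀ x : E, ‖x‖ < δ → |f x| < 1/4 := fun x hx => hfU _ (hδ x hx)
  have hf0 : f 0 = 0 := by
    have h : ψ 0 = ((0:ℝ) : 𝕋) := by simp
    show r (ψ 0) = 0
    rw [h, hrsec 0 (by norm_num)]
  have hadd : ∀ x y : E, ‖x‖ < δ → ‖y‖ < δ → ‖x + y‖ < δ → f (x + y) = f x + f y := by
    intro x y hx hy hxy
    have hc : ((f (x+y) - f x - f y : ℝ) : 𝕋) = 0 := by
      rw [AddCircle.coe_sub, AddCircle.coe_sub, hfcoe, hfcoe, hfcoe, map_add]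
      abel
    obtain ⟨z, hz⟩ := coe_int_of_coe_eq_zero hc
    have habs : |(z:ℝ)| < 1 := by
      rw [← hz]
      have h1 := hfsmall _ hxy
      have h2 := hfsmall _ hx
      have h3 := hfsmall _ hy
      rw [abs_lt] at h1 h2 h3 ⊢
      constructor <;> [linarith; linarith]
    have hz0 := int_abs_lt_one habs
    rw [hz0] at hz
    linarith [hz]
  have hnsmul : ∀ (n : ℕ) (y : E), (n : ℝ) * ‖y‖ < δ → f ((n:ℝ) • y) = n * f y := by
    intro n
    induction n with
    | zero => intro y _; simp [hf0]
    | succ n ih =>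
      intro y hy
      have hyn : (0:ℝ) ≤ ‖y‖ := norm_nonneg y
      have hcast : ((n+1 : ℕ) : ℝ) = (n:ℝ) + 1 := by push_cast; ring
      rw [hcast] at hy ⊢
      have hle : (n:ℝ) * ‖y‖ ≤ ((n:ℝ)+1) * ‖y‖ := by nlinarith
      have h1 : ‖(n:ℝ) • y‖ < δ := by rw [norm_smul]; simp only [Real.norm_natCast]; linarith
      have h2 : ‖y‖ < δ := by nlinarith
      have h3 : ‖(n:ℝ) • y + y‖ < δ := by
        calc ‖(n:ℝ) • y + y‖ ≤ ‖(n:ℝ) • y‖ + ‖y‖ := norm_add_le _ _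
        _ = (n:ℝ) * ‖y‖ + ‖y‖ := by rw [norm_smul]; simp
        _ < δ := by nlinarith
      have hsp : ((n:ℝ)+1) • y = (n:ℝ) • y + y := by rw [add_smul, one_smul]
      rw [hsp, hadd _ _ h1 h2 h3, ih y (by nlinarith)]
      ring
  -- consistency
  have key : ∀ x : E, ∃ c : ℝ, ∀ n : ℕ, ‖x‖ < (n:ℝ) * δ → (n:ℝ) * f ((n:ℝ)⁻¹ • x) = c := by
    intro x
    have claim : ∀ m k : ℕ, 0 < m → 0 < k → ‖x‖ < (m:ℝ) * δ →
        (m:ℝ) * f ((m:ℝ)⁻¹ • x) = ((m*k : ℕ):ℝ) * f (((m*k : ℕ):ℝ)⁻¹ • x) := by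
      intro m k hm hk hx
      have hm' : ((m:ℕ):ℝ) ≠ 0 := Nat.cast_ne_zero.2 hm.ne'
      have hk' : ((k:ℕ):ℝ) ≠ 0 := Nat.cast_ne_zero.2 hk.ne'
      have hmk : ((m*k : ℕ):ℝ) = (m:ℝ) * (k:ℝ) := by push_cast; ring
      have hsm : (k:ℝ) • (((m*k : ℕ):ℝ)⁻¹ • x) = (m:ℝ)⁻¹ • x := by
        rw [smul_smul, hmk]
        congr 1
        field_simp
      have hmpos : (0:ℝ) < (m:ℝ) := by exact_mod_cast hm
      have hkpos : (0:ℝ) < (k:ℝ) := by exact_mod_cast hk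
      have hnorm : (k:ℝ) * ‖((m*k : ℕ):ℝ)⁻¹ • x‖ < δ := by
        rw [norm_smul, norm_inv, Real.norm_natCast, hmk]
        have harith : (k:ℝ) * (((m:ℝ)*(k:ℝ))⁻¹ * ‖x‖) = ‖x‖ / (m:ℝ) := by
          field_simp
        rw [harith, div_lt_iff₀ hmpos]
        linarith
      have := hnsmul k (((m*k : ℕ):ℝ)⁻¹ • x) hnorm
      rw [hsm] at this
      rw [this, hmk]
      ring
    obtain ⟨N, hN⟩ := exists_nat_gt (‖x‖ / δ)
    have hNδ : ‖x‖ < (N:ℝ) * δ := by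
      rw [div_lt_iff₀ hδpos] at hN; linarith
    have hN0 : 0 < N := by
      by_contra h
      push_neg at h
      interval_cases N
      simp at hNδ
      nlinarith [norm_nonneg x]
    refine ⟨(N:ℝ) * f ((N:ℝ)⁻¹ • x), ?_⟩
    intro n hn
    have hn0 : 0 < n := by
      by_contra h
      push_neg at h
      interval_cases n
      simp at hn
      nlinarith [norm_nonneg x]
    have e1 := claim n N hn0 hN0 hn
    have e2 := claim N n hN0 hn0 hNδ
    rw [Nat.mul_comm N n] at e2
    rw [e1, e2]
  choose F hF using key
  have exists_n : ∀ x : E, ∃ n : ℕ, 0 < n ∧ ‖x‖ < (n:ℝ) * δ := by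
    intro x
    obtain ⟨N, hN⟩ := exists_nat_gt (‖x‖ / δ)
    have hNδ : ‖x‖ < (N:ℝ) * δ := by rw [div_lt_iff₀ hδpos] at hN; linarith
    have hN0 : 0 < N := by
      by_contra h; push_neg at h; interval_cases N
      simp at hNδ; nlinarith [norm_nonneg x]
    exact ⟨N, hN0, hNδ⟩
  have hFcoe : ∀ x, ((F x : ℝ) : 𝕋) = ψ x := by
    intro x
    obtain ⟨n, hn0, hn⟩ := exists_n x
    rw [← hF x n hn]
    have h1 : ((n:ℝ) * f ((n:ℝ)⁻¹ • x) : ℝ) = ((n:ℕ) • (f ((n:ℝ)⁻¹ • x)) : ℝ) := by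
      simp [nsmul_eq_mul]
    rw [h1, AddCircle.coe_nsmul, hfcoe, ← map_nsmul]
    congr 1
    rw [← Nat.cast_smul_eq_nsmul ℝ, smul_smul, mul_inv_cancel₀ (Nat.cast_ne_zero.2 hn0.ne'), one_smul]
  have hFadd : ∀ x y, F (x + y) = F x + F y := by
    intro x y
    obtain ⟨N, hN⟩ := exists_nat_gt ((‖x‖ + ‖y‖) / δ)
    have hsum : ‖x‖ + ‖y‖ < (N:ℝ) * δ := by rw [div_lt_iff₀ hδpos] at hN; linarith
    have hx : ‖x‖ < (N:ℝ) * δ := by linarith [norm_nonneg y]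
    have hy : ‖y‖ < (N:ℝ) * δ := by linarith [norm_nonneg x]
    have hxy : ‖x + y‖ < (N:ℝ) * δ := by linarith [norm_add_le x y]
    have hN0 : 0 < N := by
      by_contra h; push_neg at h; interval_cases N
      simp at hx; nlinarith [norm_nonneg x]
    have hNR : (0:ℝ) < (N:ℝ) := by exact_mod_cast hN0
    rw [← hF x N hx, ← hF y N hy, ← hF (x+y) N hxy]
    have hsp : (N:ℝ)⁻¹ • (x + y) = (N:ℝ)⁻¹ • x + (N:ℝ)⁻¹ • y := smul_add _ _ _
    have bsmall : ∀ w : E, ‖w‖ < (N:ℝ) * δ → ‖(N:ℝ)⁻¹ • w‖ < δ := by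
      intro w hw
      rw [norm_smul, norm_inv, Real.norm_natCast, inv_mul_lt_iff₀ hNR]
      exact hw
    rw [hsp, hadd _ _ (bsmall x hx) (bsmall y hy) (by rw [← hsp]; exact bsmall _ hxy)]
    ring
  have hFcont : Continuous F := by
    rw [continuous_iff_continuousAt]
    intro x₀
    obtain ⟨n, hn⟩ := exists_nat_gt ((‖x₀‖ + 1) / δ)
    have hn' : ‖x₀‖ + 1 < (n:ℝ) * δ := by rw [div_lt_iff₀ hδpos] at hn; linarith
    have hnR : (0:ℝ) < (n:ℝ) := by
      rcases Nat.eq_zero_or_pos n with h | h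
      · subst h; simp at hn'; nlinarith [norm_nonneg x₀]
      · exact_mod_cast h
    have heq : ∀ᶠ x in nhds x₀, F x = (n:ℝ) * f ((n:ℝ)⁻¹ • x) := by
      filter_upwards [Metric.ball_mem_nhds x₀ one_pos] with x hx
      have hxn : ‖x‖ < (n:ℝ) * δ := by
        have h1 : ‖x‖ - ‖x₀‖ ≤ ‖x - x₀‖ := norm_sub_norm_le _ _
        have h2 : ‖x - x₀‖ < 1 := by rwa [Metric.mem_ball, dist_eq_norm] at hx
        linarith
      exact (hF x n hxn).symm
    have hx₀n : ‖(n:ℝ)⁻¹ • x₀‖ < δ := by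
      rw [norm_smul, norm_inv, Real.norm_natCast, inv_mul_lt_iff₀ hnR]
      linarith [norm_nonneg x₀]
    have hmem : ψ ((n:ℝ)⁻¹ • x₀) ∈ U := hδ _ hx₀n
    have hrc : ContinuousAt r (ψ ((n:ℝ)⁻¹ • x₀)) := by
      exact continuousAt_subtype_val.comp (AddCircle.continuousAt_equivIco 1 (-(1/2)) (hUne _ hmem))
    have hsc : ContinuousAt (fun x : E => (n:ℝ)⁻¹ • x) x₀ :=
      (continuous_const_smul ((n:ℝ)⁻¹)).continuousAt
    have hψc : ContinuousAt ψ ((n:ℝ)⁻¹ • x₀) := hψ.continuousAt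
    have hcomp := ContinuousAt.comp (x := x₀) (g := r)
      (f := fun x : E => ψ ((n:ℝ)⁻¹ • x)) hrc (ContinuousAt.comp (g := ⇑ψ) hψc hsc)
    have hrhs : ContinuousAt (fun x : E => (n:ℝ) * f ((n:ℝ)⁻¹ • x)) x₀ :=
      ContinuousAt.mul continuousAt_const hcomp
    apply hrhs.congr
    filter_upwards [heq] with x hx
    exact hx.symm
  -- assemble
  refine ⟨(AddMonoidHom.mk' F hFadd).toRealLinearMap hFcont, ?_⟩
  intro x
  have hc : ((AddMonoidHom.mk' F hFadd).toRealLinearMap hFcont) x = F x := by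
    rfl
  rw [hc]
  exact hFcoe x


end Lift

noncomputable def g (n : ℕ) : (Fin n → ℝ) →ₗ[ℝ] ((ℕ → ℝ) →L[ℝ] ℝ) where
  toFun c := ∑ i : Fin n, c i • ContinuousLinearMap.proj (R := ℝ) (φ := fun _ : ℕ => ℝ) (i : ℕ)
  map_add' c d := by simp [add_smul, Finset.sum_add_distrib]
  map_smul' t c := by simp [smul_smul, Finset.smul_sum]

theorem g_cont (n : ℕ) : Continuous (g n) := (g n).continuous_of_finiteDimensional

theorem g_apply (n : ℕ) (c : Fin n → ℝ) (x : ℕ → ℝ) :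
    g n c x = ∑ i : Fin n, c i * x (i : ℕ) := by
  simp [g, ContinuousLinearMap.sum_apply]

theorem mem_range_g (f : (ℕ → ℝ) →L[ℝ] ℝ) : ∃ n c, g n c = f := by
  have h0 : IsOpen (f ⁻¹' Metric.ball (0:ℝ) 1) := f.continuous.isOpen_preimage _ Metric.isOpen_ball
  have h0m : (0 : ℕ → ℝ) ∈ f ⁻¹' Metric.ball (0:ℝ) 1 := by simp
  obtain ⟨I, u, hu, hsub⟩ := (isOpen_pi_iff.1 h0) 0 h0m
  -- any x vanishing on I is killed by f
  have hkill : ∀ x : ℕ → ℝ, (∀ i ∈ I, x i = 0) → f x = 0 := by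
    intro x hx
    by_contra hfx
    have : ∀ t : ℝ, |f (t • x)| < 1 := by
      intro t
      have hmem : t • x ∈ (I : Set ℕ).pi u := by
        intro i hi
        have h' : (t • x) i = 0 := by simp [hx i hi]
        rw [h']
        exact (hu i hi).2
      have h2 := hsub hmem
      simp only [mem_preimage, Metric.mem_ball, dist_zero_right, Real.norm_eq_abs] at h2
      exact h2
    have h2 := this ((2 : ℝ) / f x)
    rw [map_smul, smul_eq_mul, abs_mul] at h2
    rw [abs_div, div_mul_cancel₀ _ (abs_ne_zero.2 hfx)] at h2
    norm_num at h2
  classical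
  set n : ℕ := (I.sup id) + 1 with hn
  refine ⟨n, fun i => f (Pi.single (i : ℕ) 1), ?_⟩
  ext x
  rw [g_apply]
  have hdecomp : f x = f (∑ i : Fin n, x (i:ℕ) • (Pi.single (i:ℕ) (1:ℝ) : ℕ → ℝ)) + f (x - ∑ i : Fin n, x (i:ℕ) • (Pi.single (i:ℕ) (1:ℝ) : ℕ → ℝ)) := by
    rw [← map_add]; congr 1; abel
  have hzero : f (x - ∑ i : Fin n, x (i:ℕ) • (Pi.single (i:ℕ) (1:ℝ) : ℕ → ℝ)) = 0 := by
    apply hkill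
    intro i hi
    have hilt : i < n := Nat.lt_succ_of_le (Finset.le_sup (f := id) hi)
    have : (∑ j : Fin n, x (j:ℕ) • (Pi.single (j:ℕ) (1:ℝ) : ℕ → ℝ)) i = x i := by
      rw [Finset.sum_apply]
      rw [Finset.sum_eq_single (⟨i, hilt⟩ : Fin n)]
      · simp
      · intro j _ hj
        have : (j : ℕ) ≠ i := by
          intro h; apply hj; ext; exact h
        simp [Pi.single_apply, this]
      · simp
    simp [this]
  rw [hdecomp, hzero, add_zero, map_sum]
  congr 1; ext i
  rw [map_smul]
  simp [mul_comm]

/-- Let `φ` be the strong dual of `ℝ^ω = ℕ → ℝ`, i.e. the space `(ℕ → ℝ) →L[ℝ] ℝ` of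
continuous linear functionals with the topology of uniform convergence on von Neumann
bounded sets (the default topology on continuous linear maps in Mathlib).  There is no
continuous surjective additive group homomorphism from `φ` onto `𝕋^ω`. -/
theorem no_continuous_surjective_hom_strong_dual_to_torus_power :
    ¬ ∃ T : ((ℕ → ℝ) →L[ℝ] ℝ) →+ (ℕ → AddCircle (1 : ℝ)),
        Continuous T ∧ Function.Surjective T := by
  rintro ⟨T, hTc, hTs⟩
  classical
  -- the finite-dimensional pieces mapped into the torus power
  let S : ∀ n : ℕ, (Fin n → ℝ) →+ (ℕ → AddCircle (1:ℝ)) :=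
    fun n => T.comp (g n).toAddMonoidHom
  have hScont : ∀ n, Continuous (S n) := fun n => hTc.comp (g_cont n)
  -- countable cover of the torus power by compact sets
  have hcover : (⋃ p : ℕ × ℕ, (S p.1) '' Metric.closedBall 0 p.2) = Set.univ := by
    rw [Set.eq_univ_iff_forall]
    intro y
    obtain ⟨f, rfl⟩ := hTs y
    obtain ⟨n, c, rfl⟩ := mem_range_g f
    apply Set.mem_iUnion.2
    refine ⟨(n, ⌈‖c‖⌉₊), ⟨c, ?_, rfl⟩⟩
    rw [Metric.mem_closedBall, dist_zero_right]
    exact (Nat.le_ceil ‖c‖)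
  obtain ⟨⟨n, m⟩, y, hy⟩ := nonempty_interior_of_iUnion_of_closed
    (fun p : ℕ × ℕ =>
      ((isCompact_closedBall (0 : Fin p.1 → ℝ) p.2).image (hScont p.1)).isClosed) hcover
  -- the range of `S n` is an open, hence clopen, subgroup; by connectedness it is everything
  have hyH : ((S n).range : Set (ℕ → AddCircle (1:ℝ))) ∈ nhds y := by
    apply Filter.mem_of_superset (mem_interior_iff_mem_nhds.1 hy)
    rintro _ ⟨c, _, rfl⟩
    exact ⟨c, rfl⟩
  have hopen := AddSubgroup.isOpen_of_mem_nhds (S n).range hyH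
  have hclosed := AddSubgroup.isClosed_of_isOpen _ hopen
  have htop : ((S n).range : Set (ℕ → AddCircle (1:ℝ))) = Set.univ :=
    IsClopen.eq_univ ⟨hclosed, hopen⟩ ⟨0, (S n).range.zero_mem⟩
  have hSsurj : Function.Surjective (S n) := by
    intro w
    have hw : w ∈ ((S n).range : Set (ℕ → AddCircle (1:ℝ))) :=
      Set.eq_univ_iff_forall.1 htop w
    exact hw
  -- lift the coordinate homomorphisms to continuous linear functionals
  have hχ : ∀ j : Fin (n+1), ∃ F : (Fin n → ℝ) →L[ℝ] ℝ,
      ∀ x, ((F x : ℝ) : AddCircle (1:ℝ)) = S n x (j : ℕ) := by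
    intro j
    exact exists_lift ((Pi.evalAddMonoidHom (fun _ : ℕ => AddCircle (1:ℝ)) ((j:ℕ))).comp (S n))
      ((continuous_apply ((j:ℕ))).comp (hScont n))
  choose F hF using hχ
  let L : (Fin n → ℝ) →ₗ[ℝ] (Fin (n+1) → ℝ) :=
    LinearMap.pi fun j => ((F j) : (Fin n → ℝ) →ₗ[ℝ] ℝ)
  set V := LinearMap.range L with hV
  have hVne : V ≠ ⊤ := by
    intro htop'
    have h1 : Module.finrank ℝ V ≤ n := by
      have := LinearMap.finrank_range_le L
      simpa using this
    rw [htop'] at h1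
    rw [finrank_top] at h1
    simp at h1
  -- the translates of V by integer vectors cover ℝ^{n+1}
  have hcover2 : (⋃ z : Fin (n+1) → ℤ,
      (fun y : Fin (n+1) → ℝ => y - fun j => ((z j : ℝ))) ⁻¹' (V : Set (Fin (n+1) → ℝ)))
      = Set.univ := by
    rw [Set.eq_univ_iff_forall]
    intro y
    set Y : ℕ → AddCircle (1:ℝ) :=
      fun k => if hk : k < n+1 then ((y ⟨k, hk⟩ : ℝ) : AddCircle (1:ℝ)) else 0 with hYdef
    obtain ⟨x, hx⟩ := hSsurj Y
    have hzj : ∀ j : Fin (n+1), ∃ zj : ℤ, y j - F j x = zj := by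
      intro j
      apply coe_int_of_coe_eq_zero
      rw [AddCircle.coe_sub, hF j x]
      have h1 : S n x ((j:ℕ)) = Y ((j:ℕ)) := congrFun hx ((j:ℕ))
      have h2 : Y ((j:ℕ)) = ((y j : ℝ) : AddCircle (1:ℝ)) := by
        rw [hYdef]
        simp only [dif_pos j.isLt, Fin.eta]
      rw [h1, h2, sub_self]
    choose z hz using hzj
    apply Set.mem_iUnion.2
    refine ⟨z, ⟨x, ?_⟩⟩
    funext j
    have hLj : L x j = F j x := rfl
    simp only [Pi.sub_apply]
    rw [hLj, ← hz j]
    ring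
  obtain ⟨z, w, hw⟩ := nonempty_interior_of_iUnion_of_closed
    (fun z : Fin (n+1) → ℤ =>
      (Submodule.closed_of_finiteDimensional V).preimage (continuous_sub_right _))
    hcover2
  -- hence V has nonempty interior, so V = ⊤, contradiction
  apply hVne
  apply V.eq_top_of_nonempty_interior'
  let e : (Fin (n+1) → ℝ) ≃ₜ (Fin (n+1) → ℝ) := Homeomorph.subRight (fun j => ((z j : ℝ)))
  have hpre : (fun y : Fin (n+1) → ℝ => y - fun j => ((z j : ℝ)))
      = ⇑e := rfl
  rw [hpre] at hw
  rw [← e.preimage_interior] at hw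
  exact ⟨e w, hw⟩
end

section
/- Let φ be the strong dual of ℝ^ω, i.e. the space of continuous linear functionals on ℕ → ℝ equipped with the topology of uniform convergence on (von Neumann) bounded subsets of ℝ^ω. Then for every continuous additive group homomorphism T : φ → 𝕋^ω, the image T(φ) is σ-compact, i.e. a countable union of compact subsets of 𝕋^ω. -/
/-!
A continuous linear functional on `ι → 𝕜` is small on a basic neighbourhood of `0`, which
constrains only finitely many coordinates; by scaling it vanishes on all vectors supported off
those coordinates, so it is a finite combination of coordinate projections. Hence the dual of
`ℕ → ℝ` is the countable union of the spans of finitely many projections, each the continuous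
image of a finite-dimensional space and so σ-compact for any vector space topology on the dual,
the strong one included. The image of a σ-compact space under a continuous map is σ-compact.
-/

open Set

section FiniteSpan

variable {𝕜 M : Type*} [NontriviallyNormedField 𝕜] [ProperSpace 𝕜]
  [AddCommGroup M] [Module 𝕜 M] [TopologicalSpace M] [IsTopologicalAddGroup M] [ContinuousSMul 𝕜 M]

theorem isSigmaCompact_span_of_finite {s : Set M} (hs : s.Finite) :
    IsSigmaCompact (Submodule.span 𝕜 s : Set M) := by
  have := hs.fintype
  rw [← Subtype.range_coe (s := s), ← Fintype.range_linearCombination, LinearMap.coe_range]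
  exact isSigmaCompact_range
    (Fintype.linearCombination 𝕜 ((↑) : s → M)).continuous_of_finiteDimensional

end FiniteSpan

namespace ContinuousLinearMap

variable {𝕜 ι : Type*} [NontriviallyNormedField 𝕜]

theorem exists_finset_map_eq_zero_of_forall_mem_eq_zero {F : Type*} [NormedAddCommGroup F]
    [NormedSpace 𝕜 F] (f : (ι → 𝕜) →L[𝕜] F) :
    ∃ s : Finset ι, ∀ x, (∀ i ∈ s, x i = 0) → f x = 0 := by
  obtain ⟨s, U, hU, hsU⟩ := isOpen_pi_iff.1 (Metric.isOpen_ball.preimage f.continuous) 0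
    (by simp : (0 : ι → 𝕜) ∈ f ⁻¹' Metric.ball 0 1)
  refine ⟨s, fun x hx => ?_⟩
  have hsmall : ∀ c : 𝕜, ‖c‖ * ‖f x‖ < 1 := fun c => by
    have hcx : c • x ∈ (s : Set ι).pi U := fun i hi => by
      simpa [hx i hi] using (hU i hi).2
    simpa [norm_smul] using hsU hcx
  by_contra hfx
  obtain ⟨c, hc⟩ := NormedField.exists_lt_norm 𝕜 ‖f x‖⁻¹
  have := hsmall c
  rw [← lt_div_iff₀ (norm_pos_iff.2 hfx), one_div] at this
  exact (hc.trans this).false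

variable [DecidableEq ι]

theorem exists_finset_eq_sum_smul_proj (f : (ι → 𝕜) →L[𝕜] 𝕜) :
    ∃ s : Finset ι, f = ∑ i ∈ s, f (Pi.single i 1) • proj i := by
  obtain ⟨s, hs⟩ := f.exists_finset_map_eq_zero_of_forall_mem_eq_zero
  refine ⟨s, ext fun x => ?_⟩
  have hsplit : x = ∑ i ∈ s, x i • Pi.single i 1 + (x - ∑ i ∈ s, Pi.single i (x i)) := by
    simp [← Pi.single_smul]
  have htail : f (x - ∑ i ∈ s, Pi.single i (x i)) = 0 :=
    hs _ fun i hi => by simp [Finset.sum_pi_single, hi]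
  conv_lhs => rw [hsplit, map_add, htail, add_zero, map_sum]
  simp [mul_comm]

theorem exists_finset_mem_span_proj (f : (ι → 𝕜) →L[𝕜] 𝕜) :
    ∃ s : Finset ι, f ∈ Submodule.span 𝕜 ((proj · : ι → (ι → 𝕜) →L[𝕜] 𝕜) '' s) := by
  obtain ⟨s, hs⟩ := f.exists_finset_eq_sum_smul_proj
  exact ⟨s, hs ▸ Submodule.sum_mem _ fun i hi =>
    Submodule.smul_mem _ _ (Submodule.subset_span (mem_image_of_mem _ hi))⟩

instance [ProperSpace 𝕜] [Countable ι] : SigmaCompactSpace ((ι → 𝕜) →L[𝕜] 𝕜) := by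
  rw [← isSigmaCompact_univ_iff, ← iUnion_eq_univ_iff.2 exists_finset_mem_span_proj]
  exact isSigmaCompact_iUnion _ fun s => isSigmaCompact_span_of_finite (s.finite_toSet.image _)

end ContinuousLinearMap

/-- Let `φ` be the strong dual of `ℝ^ω = ℕ → ℝ`, i.e. the space `(ℕ → ℝ) →L[ℝ] ℝ` of
continuous linear functionals with the topology of uniform convergence on von Neumann
bounded sets (the default topology on continuous linear maps in Mathlib).  For every
continuous additive group homomorphism `T : φ → 𝕋^ω`, the image `T(φ)` is σ-compact:
it is a countable union of compact subsets of `𝕋^ω`. -/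
theorem image_of_strong_dual_in_torus_power_is_sigma_compact
    (T : ((ℕ → ℝ) →L[ℝ] ℝ) →+ (ℕ → AddCircle (1 : ℝ)))
    (hT : Continuous T) :
    ∃ K : ℕ → Set (ℕ → AddCircle (1 : ℝ)),
      (∀ n, IsCompact (K n)) ∧ Set.range T = ⋃ n, K n := by
  obtain ⟨K, hK, hKT⟩ := isSigmaCompact_range hT
  exact ⟨K, hK, hKT.symm⟩
end
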